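/- arXiv:2503.14885 — 5 statements merged into one kernel-verified Lean document; each statement's English description precedes it below -/
import Mathlib

section
/- Let n₁, n₂, p > 1 and let p' be the conjugate exponent of p. Set δ = n₂/p + n₁/p'. Let K : (0,∞) × (0,∞) → [0,∞) be a measurable kernel which is homogeneous of degree −δ, i.e. K(λx, λy) = λ^{−δ} K(x,y) for all λ, x, y > 0, and assume C₀ := ∫₀^∞ K(x,1) x^{n₂/p − 1} dx < ∞. Then the integral operator T f(x) = ∫₀^∞ K(x,y) f(y) y^{n₁−1} dy satisfies ‖Tf‖_{L^p((0,∞), x^{n₂−1}dx)} ≤ C₀ ‖f‖_{L^p((0,∞), x^{n₁−1}dx)} for every f ∈ L^p((0,∞), x^{n₁−1}dx). -/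
open MeasureTheory Set
open scoped ENNReal

noncomputable def powMeasure (n : ℝ) : Measure ℝ :=
  (volume.restrict (Ioi (0 : ℝ))).withDensity fun x => ENNReal.ofReal (x ^ (n - 1))

/-!
Schur's test with the power weights `φ y = y ^ (-n₁/(p p'))` and `ψ x = x ^ (-n₂/(p p'))`.
Hölder's inequality on each row, weighted by `φ`, followed by Tonelli, bounds `‖T f‖_p` by
`A ^ (1/p') B ^ (1/p) ‖f‖_p`, where `A` and `B` bound the weighted row and column integrals of the
kernel. For a kernel homogeneous of degree `-δ` the substitution `y = x t` makes these integrals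
exact powers of `x` (resp. `y`) times a Mellin moment of `K(1, ·)` (resp. `K(·, 1)`); the choice
`δ = n₂/p + n₁/p'` makes the powers match the weights, and the inversion `t ↦ 1/t` turns the
moment of `K(1, ·)` into that of `K(·, 1)`, which is `C₀`.
-/

section Schur

variable {α β : Type*} [MeasurableSpace α] [MeasurableSpace β] {μ : Measure α} {ν : Measure β}
  {p q : ℝ}

theorem lintegral_mul_rpow_le_weighted (hpq : p.HolderConjugate q) {κ φ g : β → ℝ≥0∞}
    (hκ : AEMeasurable κ ν) (hφ : AEMeasurable φ ν) (hg : AEMeasurable g ν)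
    (hφ₀ : ∀ᵐ y ∂ν, φ y ≠ 0 ∧ φ y ≠ ∞) :
    (∫⁻ y, κ y * g y ∂ν) ^ p ≤
      (∫⁻ y, κ y * φ y ^ q ∂ν) ^ (p / q) * ∫⁻ y, κ y * (g y / φ y) ^ p ∂ν := by
  have hp := hpq.pos
  have hq := hpq.symm.pos
  have hsplit : ∀ᵐ y ∂ν, κ y * g y = (κ y ^ q⁻¹ * φ y) * (κ y ^ p⁻¹ * (g y / φ y)) := by
    filter_upwards [hφ₀] with y ⟨h0, htop⟩
    rw [mul_mul_mul_comm, ← ENNReal.rpow_add_of_nonneg _ _ (by positivity) (by positivity),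
      add_comm, hpq.inv_add_inv_eq_one, ENNReal.rpow_one, ENNReal.mul_div_cancel h0 htop]
  calc (∫⁻ y, κ y * g y ∂ν) ^ p
      ≤ ((∫⁻ y, (κ y ^ q⁻¹ * φ y) ^ q ∂ν) ^ (1 / q) *
          (∫⁻ y, (κ y ^ p⁻¹ * (g y / φ y)) ^ p ∂ν) ^ (1 / p)) ^ p := by
        gcongr
        rw [lintegral_congr_ae hsplit]
        exact ENNReal.lintegral_mul_le_Lp_mul_Lq ν hpq.symm
          ((hκ.pow_const _).mul hφ) ((hκ.pow_const _).mul (hg.div hφ))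
    _ = (∫⁻ y, κ y * φ y ^ q ∂ν) ^ (p / q) * ∫⁻ y, κ y * (g y / φ y) ^ p ∂ν := by
        simp only [ENNReal.mul_rpow_of_nonneg _ _ hp.le, ENNReal.mul_rpow_of_nonneg _ _ hq.le,
          ENNReal.rpow_inv_rpow hp.ne', ENNReal.rpow_inv_rpow hq.ne']
        rw [← ENNReal.rpow_mul, ← ENNReal.rpow_mul,
          one_div_mul_eq_div, one_div_mul_cancel hp.ne', ENNReal.rpow_one]

theorem lintegral_rpow_lintegral_le_of_schur [SFinite μ] [SFinite ν] (hpq : p.HolderConjugate q)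
    {k : α → β → ℝ≥0∞} {φ : β → ℝ≥0∞} {ψ : α → ℝ≥0∞} {g : β → ℝ≥0∞} {A B : ℝ≥0∞}
    (hk : Measurable (Function.uncurry k)) (hφ : AEMeasurable φ ν) (hψ : AEMeasurable ψ μ)
    (hg : AEMeasurable g ν) (hφ₀ : ∀ᵐ y ∂ν, φ y ≠ 0 ∧ φ y ≠ ∞)
    (hA : ∀ᵐ x ∂μ, ∫⁻ y, k x y * φ y ^ q ∂ν ≤ A * ψ x ^ q)
    (hB : ∀ᵐ y ∂ν, ∫⁻ x, k x y * ψ x ^ p ∂μ ≤ B * φ y ^ p) :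
    ∫⁻ x, (∫⁻ y, k x y * g y ∂ν) ^ p ∂μ ≤ A ^ (p / q) * B * ∫⁻ y, g y ^ p ∂ν := by
  have hp := hpq.pos
  have hq := hpq.symm.pos
  set h : β → ℝ≥0∞ := fun y => (g y / φ y) ^ p
  have hkh : AEMeasurable (fun z : α × β => k z.1 z.2 * h z.2) (μ.prod ν) :=
    hk.aemeasurable.mul ((hg.div hφ).pow_const p).comp_snd
  calc ∫⁻ x, (∫⁻ y, k x y * g y ∂ν) ^ p ∂μ
      ≤ ∫⁻ x, A ^ (p / q) * (ψ x ^ p * ∫⁻ y, k x y * h y ∂ν) ∂μ := by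
        refine lintegral_mono_ae ?_
        filter_upwards [hA] with x hAx
        calc (∫⁻ y, k x y * g y ∂ν) ^ p
            ≤ (∫⁻ y, k x y * φ y ^ q ∂ν) ^ (p / q) * ∫⁻ y, k x y * h y ∂ν :=
              lintegral_mul_rpow_le_weighted hpq hk.of_uncurry_left.aemeasurable hφ hg hφ₀
          _ ≤ (A * ψ x ^ q) ^ (p / q) * ∫⁻ y, k x y * h y ∂ν := by gcongr
          _ = A ^ (p / q) * (ψ x ^ p * ∫⁻ y, k x y * h y ∂ν) := by
            rw [ENNReal.mul_rpow_of_nonneg _ _ (by positivity), ← ENNReal.rpow_mul,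
              mul_div_cancel₀ p hq.ne', mul_assoc]
    _ = A ^ (p / q) * ∫⁻ x, ∫⁻ y, ψ x ^ p * (k x y * h y) ∂ν ∂μ := by
        have hx : AEMeasurable (fun x => ψ x ^ p * ∫⁻ y, k x y * h y ∂ν) μ :=
          (hψ.pow_const p).mul hkh.lintegral_prod_right'
        rw [lintegral_const_mul'' _ hx]
        refine congrArg _ (lintegral_congr fun x => (lintegral_const_mul'' _ ?_).symm)
        exact hk.of_uncurry_left.aemeasurable.mul ((hg.div hφ).pow_const p)
    _ = A ^ (p / q) * ∫⁻ y, h y * ∫⁻ x, k x y * ψ x ^ p ∂μ ∂ν := by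
        rw [lintegral_lintegral_swap ((hψ.pow_const p).comp_fst.mul hkh)]
        refine congrArg _ (lintegral_congr fun y => ?_)
        have hy : AEMeasurable (fun x => k x y * ψ x ^ p) μ :=
          hk.of_uncurry_right.aemeasurable.mul (hψ.pow_const p)
        rw [← lintegral_const_mul'' _ hy]
        exact lintegral_congr fun x => by ring
    _ ≤ A ^ (p / q) * ∫⁻ y, h y * (B * φ y ^ p) ∂ν := by
        gcongr A ^ (p / q) * ?_
        exact lintegral_mono_ae (hB.mono fun y hy => by gcongr)
    _ = A ^ (p / q) * B * ∫⁻ y, g y ^ p ∂ν := by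
        rw [mul_assoc, ← lintegral_const_mul'' _ (hg.pow_const p)]
        refine congrArg _ (lintegral_congr_ae ?_)
        filter_upwards [hφ₀] with y ⟨h0, htop⟩
        rw [mul_left_comm, show h y = g y ^ p / φ y ^ p from ENNReal.div_rpow_of_nonneg _ _ hp.le,
          ENNReal.div_mul_cancel
          (ENNReal.rpow_pos (pos_iff_ne_zero.2 h0) htop).ne'
          (ENNReal.rpow_ne_top_of_nonneg hp.le htop)]

theorem eLpNorm_le_of_schur [SFinite μ] [SFinite ν] (hpq : p.HolderConjugate q)
    {E E' : Type*} [NormedAddCommGroup E] [NormedAddCommGroup E']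
    {k : α → β → ℝ≥0∞} {φ : β → ℝ≥0∞} {ψ : α → ℝ≥0∞} {A B : ℝ≥0∞} {T : α → E} {f : β → E'}
    (hk : Measurable (Function.uncurry k)) (hφ : AEMeasurable φ ν) (hψ : AEMeasurable ψ μ)
    (hf : AEStronglyMeasurable f ν) (hφ₀ : ∀ᵐ y ∂ν, φ y ≠ 0 ∧ φ y ≠ ∞)
    (hA : ∀ᵐ x ∂μ, ∫⁻ y, k x y * φ y ^ q ∂ν ≤ A * ψ x ^ q)
    (hB : ∀ᵐ y ∂ν, ∫⁻ x, k x y * ψ x ^ p ∂μ ≤ B * φ y ^ p)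
    (hT : ∀ᵐ x ∂μ, ‖T x‖ₑ ≤ ∫⁻ y, k x y * ‖f y‖ₑ ∂ν) :
    eLpNorm T (ENNReal.ofReal p) μ ≤
      A ^ (1 / q) * B ^ (1 / p) * eLpNorm f (ENNReal.ofReal p) ν := by
  have hp := hpq.pos
  have hp0 : ENNReal.ofReal p ≠ 0 := by simpa using hp
  rw [eLpNorm_eq_lintegral_rpow_enorm_toReal hp0 ENNReal.ofReal_ne_top,
    eLpNorm_eq_lintegral_rpow_enorm_toReal hp0 ENNReal.ofReal_ne_top, ENNReal.toReal_ofReal hp.le]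
  calc (∫⁻ x, ‖T x‖ₑ ^ p ∂μ) ^ (1 / p)
      ≤ (A ^ (p / q) * B * ∫⁻ y, ‖f y‖ₑ ^ p ∂ν) ^ (1 / p) := by
        gcongr
        calc ∫⁻ x, ‖T x‖ₑ ^ p ∂μ ≤ ∫⁻ x, (∫⁻ y, k x y * ‖f y‖ₑ ∂ν) ^ p ∂μ :=
              lintegral_mono_ae (hT.mono fun x hx => by gcongr)
          _ ≤ _ := lintegral_rpow_lintegral_le_of_schur hpq hk hφ hψ hf.enorm hφ₀ hA hB
    _ = A ^ (1 / q) * B ^ (1 / p) * (∫⁻ y, ‖f y‖ₑ ^ p ∂ν) ^ (1 / p) := by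
        rw [ENNReal.mul_rpow_of_nonneg _ _ (by positivity),
          ENNReal.mul_rpow_of_nonneg _ _ (by positivity), ← ENNReal.rpow_mul]
        congr 3
        field_simp

end Schur

theorem setLIntegral_Ioi_eq_ofReal_mul_comp_mul_left {c : ℝ} (hc : 0 < c) (g : ℝ → ℝ≥0∞) :
    ∫⁻ x in Ioi 0, g x = ENNReal.ofReal c * ∫⁻ t in Ioi 0, g (c * t) := by
  have h := lintegral_image_eq_lintegral_abs_deriv_mul (s := Ioi 0) (f := (c * ·))
    (f' := fun _ => c) measurableSet_Ioi
    (fun t _ => by simpa using ((hasDerivAt_id t).const_mul c).hasDerivWithinAt)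
    (mul_right_injective₀ hc.ne').injOn g
  rw [image_mul_left_Ioi hc, mul_zero] at h
  simpa only [mul_one, abs_of_pos hc, lintegral_const_mul' _ _ ENNReal.ofReal_ne_top] using h

theorem setLIntegral_Ioi_eq_comp_inv (g : ℝ → ℝ≥0∞) :
    ∫⁻ x in Ioi 0, g x = ∫⁻ t in Ioi 0, ENNReal.ofReal ((t ^ 2)⁻¹) * g t⁻¹ := by
  have h := lintegral_image_eq_lintegral_abs_deriv_mul measurableSet_Ioi
    (fun t ht => (hasDerivAt_inv (ne_of_gt ht)).hasDerivWithinAt) inv_injective.injOn g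
  have himg : Inv.inv '' Ioi (0 : ℝ) = Ioi 0 := by ext x; simp
  simpa only [himg, abs_neg, abs_inv, abs_sq] using h

instance (n : ℝ) : SFinite (powMeasure n) := by
  unfold powMeasure; infer_instance

theorem lintegral_powMeasure (n : ℝ) (g : ℝ → ℝ≥0∞) :
    ∫⁻ x, g x ∂powMeasure n = ∫⁻ x in Ioi 0, ENNReal.ofReal (x ^ (n - 1)) * g x :=
  lintegral_withDensity_eq_lintegral_mul_non_measurable _ (by fun_prop)
    (ae_of_all _ fun _ => ENNReal.ofReal_lt_top) g

theorem ae_powMeasure_pos (n : ℝ) : ∀ᵐ x ∂powMeasure n, 0 < x :=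
  (withDensity_absolutelyContinuous _ _).ae_le (ae_restrict_mem measurableSet_Ioi)

theorem ae_powMeasure_ofReal_rpow_ne_zero_ne_top (n a : ℝ) :
    ∀ᵐ y ∂powMeasure n, ENNReal.ofReal y ^ a ≠ 0 ∧ ENNReal.ofReal y ^ a ≠ ∞ := by
  filter_upwards [ae_powMeasure_pos n] with y hy
  have hy : ENNReal.ofReal y ≠ 0 := (ENNReal.ofReal_pos.2 hy).ne'
  exact ⟨by simp [hy], ENNReal.rpow_ne_top_of_ne_zero hy ENNReal.ofReal_ne_top⟩

theorem enorm_setIntegral_Ioi_mul_rpow_le (n : ℝ) (h : ℝ → ℝ) :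
    ‖∫ y in Ioi 0, h y * y ^ (n - 1)‖ₑ ≤ ∫⁻ y, ‖h y‖ₑ ∂powMeasure n := by
  rw [lintegral_powMeasure]
  refine (enorm_integral_le_lintegral_enorm _).trans_eq (setLIntegral_congr_fun measurableSet_Ioi
    fun y hy => ?_)
  rw [enorm_mul, Real.enorm_eq_ofReal (Real.rpow_nonneg (le_of_lt hy) _), mul_comm]

def IsHomogeneousKernel (K : ℝ → ℝ → ℝ) (d : ℝ) : Prop :=
  ∀ l ∈ Ioi (0 : ℝ), ∀ x ∈ Ioi (0 : ℝ), ∀ y ∈ Ioi (0 : ℝ), K (l * x) (l * y) = l ^ d * K x y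

namespace IsHomogeneousKernel

variable {K : ℝ → ℝ → ℝ} {d : ℝ}

theorem flip (hK : IsHomogeneousKernel K d) : IsHomogeneousKernel (fun x y => K y x) d :=
  fun l hl x hx y hy => hK l hl y hy x hx

theorem setLIntegral_Ioi_mul_rpow (hK : IsHomogeneousKernel K d) {x : ℝ} (hx : 0 < x) (s : ℝ) :
    ∫⁻ y in Ioi 0, ENNReal.ofReal (K x y * y ^ (s - 1)) =
      ENNReal.ofReal (x ^ (s + d)) * ∫⁻ t in Ioi 0, ENNReal.ofReal (K 1 t * t ^ (s - 1)) := by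
  rw [setLIntegral_Ioi_eq_ofReal_mul_comp_mul_left hx, ← lintegral_const_mul' _ _
    ENNReal.ofReal_ne_top, ← lintegral_const_mul' _ _ ENNReal.ofReal_ne_top]
  refine setLIntegral_congr_fun measurableSet_Ioi fun t ht => ?_
  have hKx : K x (x * t) = x ^ d * K 1 t := by simpa using hK x hx 1 (mem_Ioi.2 one_pos) t ht
  rw [← ENNReal.ofReal_mul hx.le, ← ENNReal.ofReal_mul (by positivity), hKx,
    Real.mul_rpow hx.le (le_of_lt ht)]
  have hpow : x ^ (s + d) = x ^ (1 : ℝ) * x ^ d * x ^ (s - 1) := by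
    rw [← Real.rpow_add hx, ← Real.rpow_add hx]; ring_nf
  rw [hpow, Real.rpow_one]
  ring_nf

theorem setLIntegral_Ioi_one_left_eq_one_right (hK : IsHomogeneousKernel K d) (s : ℝ) :
    ∫⁻ t in Ioi 0, ENNReal.ofReal (K 1 t * t ^ (s - 1)) =
      ∫⁻ t in Ioi 0, ENNReal.ofReal (K t 1 * t ^ (-(s + d) - 1)) := by
  rw [setLIntegral_Ioi_eq_comp_inv]
  refine setLIntegral_congr_fun measurableSet_Ioi fun t ht => ?_
  have ht : 0 < t := ht
  have hKt : K 1 t⁻¹ = t ^ (-d) * K t 1 := by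
    simpa [ht.ne', Real.inv_rpow ht.le, Real.rpow_neg ht.le] using
      hK t⁻¹ (inv_pos.2 ht) t ht 1 (mem_Ioi.2 one_pos)
  rw [← ENNReal.ofReal_mul (by positivity), hKt, Real.inv_rpow ht.le, ← Real.rpow_neg ht.le,
    ← Real.rpow_natCast, ← Real.rpow_neg ht.le]
  have hpow : t ^ (-(s + d) - 1) = t ^ (-(s - 1)) * (t ^ (-(2 : ℝ)) * t ^ (-d)) := by
    rw [← Real.rpow_add ht, ← Real.rpow_add ht]; ring_nf
  push_cast
  rw [hpow]
  ring_nf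

theorem lintegral_powMeasure_mul_rpow (hK : IsHomogeneousKernel K d) {x : ℝ} (hx : 0 < x)
    (n e : ℝ) :
    ∫⁻ y, ENNReal.ofReal (K x y) * ENNReal.ofReal y ^ e ∂powMeasure n =
      ENNReal.ofReal x ^ (n + e + d) * ∫⁻ t in Ioi 0, ENNReal.ofReal (K 1 t * t ^ (n + e - 1)) := by
  rw [lintegral_powMeasure, ENNReal.ofReal_rpow_of_pos hx, ← hK.setLIntegral_Ioi_mul_rpow hx]
  refine setLIntegral_congr_fun measurableSet_Ioi fun y hy => ?_
  have hy : 0 < y := hy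
  rw [ENNReal.ofReal_rpow_of_pos hy, mul_left_comm, ← ENNReal.ofReal_mul (by positivity),
    ← ENNReal.ofReal_mul' (by positivity), ← Real.rpow_add hy]
  ring_nf

section PowerWeights

variable {n₁ n₂ p q δ : ℝ}

theorem lintegral_powMeasure_row_weight (hK : IsHomogeneousKernel K (-δ))
    (hpq : p.HolderConjugate q) (hδ : δ = n₂ / p + n₁ / q) {x : ℝ} (hx : 0 < x) :
    ∫⁻ y, ENNReal.ofReal (K x y) * (ENNReal.ofReal y ^ (-(n₁ / (p * q)))) ^ q ∂powMeasure n₁ =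
      (∫⁻ t in Ioi 0, ENNReal.ofReal (K t 1 * t ^ (n₂ / p - 1))) *
        (ENNReal.ofReal x ^ (-(n₂ / (p * q)))) ^ q := by
  have := hpq.ne_zero
  have := hpq.symm.ne_zero
  have h := hpq.inv_add_inv_eq_one
  field_simp at h
  have e₁ : n₁ + -(n₁ / (p * q)) * q + -δ = -(n₂ / (p * q)) * q := by
    rw [hδ]; field_simp; linear_combination (-n₁) * h
  have e₂ : -(-(n₂ / (p * q)) * q) - 1 = n₂ / p - 1 := by field_simp
  simp_rw [← ENNReal.rpow_mul]
  rw [hK.lintegral_powMeasure_mul_rpow hx, hK.setLIntegral_Ioi_one_left_eq_one_right, e₁, e₂,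
    mul_comm]

theorem lintegral_powMeasure_col_weight (hK : IsHomogeneousKernel K (-δ))
    (hpq : p.HolderConjugate q) (hδ : δ = n₂ / p + n₁ / q) {y : ℝ} (hy : 0 < y) :
    ∫⁻ x, ENNReal.ofReal (K x y) * (ENNReal.ofReal x ^ (-(n₂ / (p * q)))) ^ p ∂powMeasure n₂ =
      (∫⁻ t in Ioi 0, ENNReal.ofReal (K t 1 * t ^ (n₂ / p - 1))) *
        (ENNReal.ofReal y ^ (-(n₁ / (p * q)))) ^ p := by
  have := hpq.ne_zero
  have := hpq.symm.ne_zero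
  have h := hpq.inv_add_inv_eq_one
  field_simp at h
  have e₁ : n₂ + -(n₂ / (p * q)) * p + -δ = -(n₁ / (p * q)) * p := by
    rw [hδ]; field_simp; linear_combination (-n₂) * h
  have e₂ : n₂ + -(n₂ / (p * q)) * p - 1 = n₂ / p - 1 := by
    field_simp; linear_combination (-n₂) * h
  simp_rw [← ENNReal.rpow_mul]
  rw [hK.flip.lintegral_powMeasure_mul_rpow hy, e₁, e₂, mul_comm]

end PowerWeights

end IsHomogeneousKernel

theorem hardy_littlewood_polya_homogeneous_general
    (n₁ n₂ p p' δ C₀ : ℝ)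
    (hp : 1 < p)
    (hconj : 1 / p + 1 / p' = 1)
    (hδ : δ = n₂ / p + n₁ / p')
    (K : ℝ → ℝ → ℝ)
    (hKmeas : Measurable (Function.uncurry K))
    (hKnonneg : ∀ x ∈ Ioi (0 : ℝ), ∀ y ∈ Ioi (0 : ℝ), 0 ≤ K x y)
    (hKhom : ∀ l ∈ Ioi (0 : ℝ), ∀ x ∈ Ioi (0 : ℝ), ∀ y ∈ Ioi (0 : ℝ),
      K (l * x) (l * y) = l ^ (-δ) * K x y)
    (hC₀int : IntegrableOn (fun x => K x 1 * x ^ (n₂ / p - 1)) (Ioi (0 : ℝ)))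
    (hC₀ : C₀ = ∫ x in Ioi (0 : ℝ), K x 1 * x ^ (n₂ / p - 1))
    (f : ℝ → ℝ) (hf : MemLp f (ENNReal.ofReal p) (powMeasure n₁)) :
    eLpNorm (fun x => ∫ y in Ioi (0 : ℝ), K x y * f y * y ^ (n₁ - 1))
        (ENNReal.ofReal p) (powMeasure n₂) ≤
      ENNReal.ofReal C₀ * eLpNorm f (ENNReal.ofReal p) (powMeasure n₁) := by
  have hpq : p.HolderConjugate p' :=
    Real.holderConjugate_iff.2 ⟨hp, by simpa only [one_div] using hconj⟩
  have hK : IsHomogeneousKernel K (-δ) := hKhom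
  have hC : ENNReal.ofReal C₀ = ∫⁻ t in Ioi 0, ENNReal.ofReal (K t 1 * t ^ (n₂ / p - 1)) := by
    rw [hC₀, ofReal_integral_eq_lintegral_ofReal hC₀int]
    filter_upwards [ae_restrict_mem measurableSet_Ioi] with t ht
    exact mul_nonneg (hKnonneg t ht 1 (mem_Ioi.2 one_pos)) (Real.rpow_nonneg (le_of_lt ht) _)
  have hT : ∀ᵐ x ∂powMeasure n₂, ‖∫ y in Ioi (0 : ℝ), K x y * f y * y ^ (n₁ - 1)‖ₑ ≤
      ∫⁻ y, ENNReal.ofReal (K x y) * ‖f y‖ₑ ∂powMeasure n₁ := by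
    filter_upwards [ae_powMeasure_pos n₂] with x hx
    refine (enorm_setIntegral_Ioi_mul_rpow_le n₁ _).trans_eq (lintegral_congr_ae ?_)
    filter_upwards [ae_powMeasure_pos n₁] with y hy
    rw [enorm_mul, Real.enorm_eq_ofReal (hKnonneg x hx y hy)]
  have hrow := fun x (hx : 0 < x) => (hK.lintegral_powMeasure_row_weight hpq hδ hx).le
  have hcol := fun y (hy : 0 < y) => (hK.lintegral_powMeasure_col_weight hpq hδ hy).le
  calc _ ≤ _ := eLpNorm_le_of_schur hpq hKmeas.ennreal_ofReal (by fun_prop) (by fun_prop) hf.1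
          (ae_powMeasure_ofReal_rpow_ne_zero_ne_top n₁ _) ((ae_powMeasure_pos n₂).mono hrow)
          ((ae_powMeasure_pos n₁).mono hcol) hT
    _ = ENNReal.ofReal C₀ * eLpNorm f (ENNReal.ofReal p) (powMeasure n₁) := by
        rw [← ENNReal.rpow_add_of_nonneg _ _ (one_div_nonneg.2 hpq.symm.nonneg)
          (one_div_nonneg.2 hpq.nonneg), add_comm, hconj, ENNReal.rpow_one, hC]

/-- Hardy–Littlewood–Pólya type theorem for integral operators with homogeneous kernel,
acting from `L^p((0,∞), x^{n₁-1} dx)` to `L^p((0,∞), x^{n₂-1} dx)`. -/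
theorem hardy_littlewood_polya_homogeneous
    (n₁ n₂ p p' δ C₀ : ℝ)
    (hn₁ : 1 < n₁) (hn₂ : 1 < n₂) (hp : 1 < p)
    (hconj : 1 / p + 1 / p' = 1)
    (hδ : δ = n₂ / p + n₁ / p')
    (K : ℝ → ℝ → ℝ)
    (hKmeas : Measurable (Function.uncurry K))
    (hKnonneg : ∀ x ∈ Ioi (0 : ℝ), ∀ y ∈ Ioi (0 : ℝ), 0 ≤ K x y)
    (hKhom : ∀ l ∈ Ioi (0 : ℝ), ∀ x ∈ Ioi (0 : ℝ), ∀ y ∈ Ioi (0 : ℝ),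
      K (l * x) (l * y) = l ^ (-δ) * K x y)
    (hC₀int : IntegrableOn (fun x => K x 1 * x ^ (n₂ / p - 1)) (Ioi (0 : ℝ)))
    (hC₀ : C₀ = ∫ x in Ioi (0 : ℝ), K x 1 * x ^ (n₂ / p - 1))
    (f : ℝ → ℝ) (hf : MemLp f (ENNReal.ofReal p) (powMeasure n₁)) :
    eLpNorm (fun x => ∫ y in Ioi (0 : ℝ), K x y * f y * y ^ (n₁ - 1))
        (ENNReal.ofReal p) (powMeasure n₂) ≤
      ENNReal.ofReal C₀ * eLpNorm f (ENNReal.ofReal p) (powMeasure n₁) :=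
  hardy_littlewood_polya_homogeneous_general n₁ n₂ p p' δ C₀ hp hconj hδ K hKmeas hKnonneg hKhom
    hC₀int hC₀ f hf
end

section
/- Let n₁, n₂ > 1, let 0 < β < n₁ and α > 0, and let 1 < p ≤ n₁/(n₁−β) and q ≥ n₂/α. Define, for measurable E ⊆ [1,∞), the function R₁χ_E(x) = x^{−α} ∫_{E ∩ [x,∞)} y^{−β} y^{n₁−1} dy for x ≥ 1. Then there exists a constant C > 0 such that for every measurable E ⊆ [1,∞) with μ_{n₁}(E) < ∞ and every s > 0, μ_{n₂}({x ∈ [1,∞) : R₁χ_E(x) > s}) ≤ (C μ_{n₁}(E)^{1/p} / s)^q. (That is, R₁ is of restricted weak type (p,q), i.e. bounded from L^{p,1}([1,∞), μ_{n₁}) to L^{q,∞}([1,∞), μ_{n₂}).) -/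
/-!
Write `M = μ_{n₁}(E)` and `A = ∫_E y^{-β} dμ_{n₁}(y)`, an upper bound for `x^α R₁χ_E(x)`.
Trivially `A ≤ M`. Splitting `E` at a radius `R`, the part in `[1, R]` contributes at most
`∫_0^R y^{n₁-β-1} dy = R^{n₁-β}/(n₁-β)` and the rest at most `R^{-β} M`; the choice
`R = M^{1/n₁}` gives `A ≲ M^{(n₁-β)/n₁}`. Since `(n₁-β)/n₁ ≤ 1/p ≤ 1`, the first bound for
`M ≤ 1` and the second for `M > 1` give `A ≤ C M^{1/p}`. Finally `R₁χ_E(x) ≤ x^{-α} A`, so `{R₁χ_E > s} ⊆ [1, (A/s)^{1/α})`, a set of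
`μ_{n₂}`-measure at most `(A/s)^{n₂/α} ≤ (A/s)^q` when `A/s ≥ 1` and empty otherwise.
-/

open MeasureTheory Set

/-- The measure on `[1,∞)` with density `r ^ (n-1)` with respect to Lebesgue measure. -/
noncomputable def mu (n : ℝ) : Measure ℝ :=
  (volume.restrict (Ici (1 : ℝ))).withDensity fun r => ENNReal.ofReal (r ^ (n - 1))

section Measure

variable {n : ℝ} {E : Set ℝ}

lemma mu_apply (hE : MeasurableSet E) (hE1 : E ⊆ Ici 1) :
    mu n E = ∫⁻ x in E, ENNReal.ofReal (x ^ (n - 1)) := by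
  rw [mu, withDensity_apply _ hE, Measure.restrict_restrict hE, inter_eq_left.mpr hE1]

lemma ae_restrict_rpow_nonneg (hE : MeasurableSet E) (hE1 : E ⊆ Ici 1) (r : ℝ) :
    0 ≤ᵐ[volume.restrict E] fun y => y ^ r :=
  (ae_restrict_iff' hE).2 (ae_of_all _ fun _ hy => Real.rpow_nonneg (zero_le_one.trans (hE1 hy)) _)

lemma setIntegral_rpow_eq_toReal_mu (hE : MeasurableSet E) (hE1 : E ⊆ Ici 1) :
    ∫ y in E, y ^ (n - 1) = (mu n E).toReal := by
  rw [mu_apply hE hE1, integral_eq_lintegral_of_nonneg_ae (ae_restrict_rpow_nonneg hE hE1 _)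
    (by fun_prop)]

lemma integrableOn_rpow_of_mu_lt_top (hE : MeasurableSet E) (hE1 : E ⊆ Ici 1)
    (hfin : mu n E < ⊤) : IntegrableOn (fun y => y ^ (n - 1)) E := by
  refine ⟨by fun_prop, ?_⟩
  rw [hasFiniteIntegral_iff_ofReal (ae_restrict_rpow_nonneg hE hE1 _), ← mu_apply hE hE1]
  exact hfin

lemma mu_Ico_one_le_ofReal_rpow {m T : ℝ} (hn : 1 ≤ n) (hnm : n ≤ m) :
    mu n (Ico 1 T) ≤ ENNReal.ofReal (T ^ m) := by
  rcases lt_or_ge T 1 with hT1 | hT1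
  · simp [Ico_eq_empty_of_le hT1.le]
  calc mu n (Ico 1 T) = ∫⁻ x in Ico 1 T, ENNReal.ofReal (x ^ (n - 1)) :=
        mu_apply measurableSet_Ico fun x hx => hx.1
    _ ≤ ∫⁻ _ in Ico 1 T, ENNReal.ofReal (T ^ (n - 1)) :=
        setLIntegral_mono' measurableSet_Ico fun x hx => ENNReal.ofReal_le_ofReal
          (Real.rpow_le_rpow (by linarith [hx.1]) hx.2.le (by linarith))
    _ = ENNReal.ofReal (T ^ (n - 1)) * ENNReal.ofReal (T - 1) := by
        rw [setLIntegral_const, Real.volume_Ico]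
    _ ≤ ENNReal.ofReal (T ^ (n - 1) * T) := by
        rw [ENNReal.ofReal_mul (by positivity)]
        gcongr
        linarith
    _ = ENNReal.ofReal (T ^ n) := by
        rw [← Real.rpow_add_one (by positivity), sub_add_cancel]
    _ ≤ ENNReal.ofReal (T ^ m) :=
        ENNReal.ofReal_le_ofReal (Real.rpow_le_rpow_of_exponent_le hT1 hnm)

end Measure

section WeightedIntegral

variable {n β : ℝ} {E : Set ℝ}

lemma rpow_neg_mul_rpow_le (hβ : 0 ≤ β) {y : ℝ} (hy : 1 ≤ y) :
    y ^ (-β) * y ^ (n - 1) ≤ y ^ (n - 1) :=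
  mul_le_of_le_one_left (by positivity) (Real.rpow_le_one_of_one_le_of_nonpos hy (by linarith))

lemma integrableOn_rpow_neg_mul_rpow (hE : MeasurableSet E) (hE1 : E ⊆ Ici 1)
    (hg : IntegrableOn (fun y => y ^ (n - 1)) E) (hβ : 0 ≤ β) :
    IntegrableOn (fun y => y ^ (-β) * y ^ (n - 1)) E := by
  refine hg.mono' (by fun_prop) ((ae_restrict_iff' hE).2 (ae_of_all _ fun y hy => ?_))
  have hy : 1 ≤ y := hE1 hy
  rw [Real.norm_of_nonneg (by positivity)]
  exact rpow_neg_mul_rpow_le hβ hy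

lemma setIntegral_rpow_neg_mul_rpow_le (hE : MeasurableSet E) (hE1 : E ⊆ Ici 1)
    (hg : IntegrableOn (fun y => y ^ (n - 1)) E) (hβ : 0 ≤ β) :
    ∫ y in E, y ^ (-β) * y ^ (n - 1) ≤ ∫ y in E, y ^ (n - 1) :=
  setIntegral_mono_on (integrableOn_rpow_neg_mul_rpow hE hE1 hg hβ) hg hE
    fun _ hy => rpow_neg_mul_rpow_le hβ (hE1 hy)

lemma setIntegral_rpow_neg_mul_rpow_le_add (hE : MeasurableSet E) (hE1 : E ⊆ Ici 1)
    (hg : IntegrableOn (fun y => y ^ (n - 1)) E) (hβ0 : 0 ≤ β) (hβ : β < n) {R : ℝ}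
    (hR : 0 < R) :
    ∫ y in E, y ^ (-β) * y ^ (n - 1) ≤
      R ^ (n - β) / (n - β) + R ^ (-β) * ∫ y in E, y ^ (n - 1) := by
  have hf := integrableOn_rpow_neg_mul_rpow hE hE1 hg hβ0
  have hlow : ∫ y in E ∩ Iic R, y ^ (-β) * y ^ (n - 1) ≤ R ^ (n - β) / (n - β) := by
    have hsub : E ∩ Iic R ⊆ Ioc 0 R := fun y hy => ⟨zero_lt_one.trans_le (hE1 hy.1), hy.2⟩
    have hint : IntegrableOn (fun y => y ^ (n - 1 - β)) (Ioc 0 R) :=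
      (intervalIntegral.intervalIntegrable_rpow' (by linarith)).1
    calc ∫ y in E ∩ Iic R, y ^ (-β) * y ^ (n - 1)
        = ∫ y in E ∩ Iic R, y ^ (n - 1 - β) :=
          setIntegral_congr_fun (hE.inter measurableSet_Iic) fun y hy => by
            rw [← Real.rpow_add (hsub hy).1]; ring_nf
      _ ≤ ∫ y in Ioc 0 R, y ^ (n - 1 - β) :=
          setIntegral_mono_set hint ((ae_restrict_iff' measurableSet_Ioc).2
            (ae_of_all _ fun y hy => Real.rpow_nonneg hy.1.le _)) hsub.eventuallyLE
      _ = R ^ (n - β) / (n - β) := by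
          rw [← intervalIntegral.integral_of_le hR.le, integral_rpow (Or.inl (by linarith)),
            show n - 1 - β + 1 = n - β by ring, Real.zero_rpow (by linarith), sub_zero]
  have hhigh : ∫ y in E \ Iic R, y ^ (-β) * y ^ (n - 1) ≤ R ^ (-β) * ∫ y in E, y ^ (n - 1) := by
    calc ∫ y in E \ Iic R, y ^ (-β) * y ^ (n - 1)
        ≤ ∫ y in E \ Iic R, R ^ (-β) * y ^ (n - 1) :=
          setIntegral_mono_on (hf.mono_set sdiff_subset) ((hg.mono_set sdiff_subset).const_mul _)
            (hE.diff measurableSet_Iic) fun y hy => mul_le_mul_of_nonneg_right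
              (Real.rpow_le_rpow_of_nonpos hR (not_le.1 hy.2).le (by linarith))
              (Real.rpow_nonneg (zero_le_one.trans (hE1 hy.1)) _)
      _ = R ^ (-β) * ∫ y in E \ Iic R, y ^ (n - 1) := integral_const_mul _ _
      _ ≤ R ^ (-β) * ∫ y in E, y ^ (n - 1) := by
          refine mul_le_mul_of_nonneg_left ?_ (Real.rpow_nonneg hR.le _)
          exact setIntegral_mono_set hg (ae_restrict_rpow_nonneg hE hE1 _)
            sdiff_subset.eventuallyLE
  rw [← integral_inter_add_sdiff measurableSet_Iic hf]
  exact add_le_add hlow hhigh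

lemma setIntegral_rpow_neg_mul_rpow_le_rpow (hE : MeasurableSet E) (hE1 : E ⊆ Ici 1)
    (hg : IntegrableOn (fun y => y ^ (n - 1)) E) (hβ0 : 0 ≤ β) (hβ : β < n) {θ : ℝ}
    (hθ : (n - β) / n ≤ θ) (hθ1 : θ ≤ 1) :
    ∫ y in E, y ^ (-β) * y ^ (n - 1) ≤ (1 / (n - β) + 1) * (∫ y in E, y ^ (n - 1)) ^ θ := by
  set M := ∫ y in E, y ^ (n - 1)
  have hn : 0 < n := by linarith
  have hM0 : 0 ≤ M := integral_nonneg_of_ae (ae_restrict_rpow_nonneg hE hE1 _)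
  have hC : 1 ≤ 1 / (n - β) + 1 := le_add_of_nonneg_left (one_div_nonneg.2 (by linarith))
  rcases le_or_gt M 1 with hM1 | hM1
  · calc ∫ y in E, y ^ (-β) * y ^ (n - 1) ≤ M ^ (1 : ℝ) := by
          rw [Real.rpow_one]; exact setIntegral_rpow_neg_mul_rpow_le hE hE1 hg hβ0
      _ ≤ M ^ θ := Real.rpow_le_rpow_of_exponent_ge' hM0 hM1
          ((div_pos (by linarith) hn).le.trans hθ) hθ1
      _ ≤ (1 / (n - β) + 1) * M ^ θ := le_mul_of_one_le_left (by positivity) hC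
  have hRlow : (M ^ (1 / n)) ^ (n - β) = M ^ ((n - β) / n) := by
    rw [← Real.rpow_mul hM0]; ring_nf
  have hRhigh : (M ^ (1 / n)) ^ (-β) * M = M ^ ((n - β) / n) := by
    rw [← Real.rpow_mul hM0, ← Real.rpow_add_one (by positivity)]; congr 1; field_simp; ring
  calc ∫ y in E, y ^ (-β) * y ^ (n - 1)
      ≤ (M ^ (1 / n)) ^ (n - β) / (n - β) + (M ^ (1 / n)) ^ (-β) * M :=
        setIntegral_rpow_neg_mul_rpow_le_add hE hE1 hg hβ0 hβ (by positivity)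
    _ = (1 / (n - β) + 1) * M ^ ((n - β) / n) := by rw [hRlow, hRhigh]; ring
    _ ≤ (1 / (n - β) + 1) * M ^ θ :=
        mul_le_mul_of_nonneg_left (Real.rpow_le_rpow_of_exponent_le hM1.le hθ) (by linarith)

end WeightedIntegral

lemma setOf_lt_rpow_neg_mul_subset_Ico {α s A : ℝ} (hα : 0 < α) (hs : 0 < s) {I : ℝ → ℝ}
    (hI : ∀ x, I x ≤ A) :
    {x | x ∈ Ici (1 : ℝ) ∧ s < x ^ (-α) * I x} ⊆ Ico 1 ((A / s) ^ (1 / α)) := by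
  rintro x ⟨hx1, hlt⟩
  have hx0 : 0 < x := zero_lt_one.trans_le hx1
  have hxα : 0 < x ^ α := by positivity
  have hlt' : x ^ α < A / s := by
    have := hlt.trans_le (mul_le_mul_of_nonneg_left (hI x) (by positivity))
    rw [Real.rpow_neg hx0.le, inv_mul_eq_div, lt_div_iff₀ hxα] at this
    rwa [lt_div_iff₀ hs, mul_comm]
  refine ⟨hx1, ?_⟩
  calc x = (x ^ α) ^ (1 / α) := by
        rw [← Real.rpow_mul hx0.le, mul_one_div_cancel hα.ne', Real.rpow_one]
    _ < (A / s) ^ (1 / α) := Real.rpow_lt_rpow hxα.le hlt' (by positivity)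

theorem R1_restricted_weak_type_general
    (n₁ n₂ α β p q : ℝ)
    (hn₂ : 1 < n₂)
    (hβ0 : 0 < β) (hβ : β < n₁) (hα : 0 < α)
    (hp1 : 1 < p) (hp2 : p ≤ n₁ / (n₁ - β)) (hq : n₂ / α ≤ q) :
    ∃ C > 0, ∀ E : Set ℝ, MeasurableSet E → E ⊆ Ici (1 : ℝ) → mu n₁ E < ⊤ →
      ∀ s > 0,
        mu n₂ {x | x ∈ Ici (1 : ℝ) ∧
            s < x ^ (-α) * ∫ y in E ∩ Ici x, y ^ (-β) * y ^ (n₁ - 1)} ≤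
          (ENNReal.ofReal C * (mu n₁ E) ^ (1 / p) / ENNReal.ofReal s) ^ q := by
  have hθ : (n₁ - β) / n₁ ≤ 1 / p := by
    simpa only [one_div_div] using one_div_le_one_div_of_le (by linarith) hp2
  have hθ1 : 1 / p ≤ 1 := (div_le_one (by linarith)).2 hp1.le
  have hq0 : 0 < q := (div_pos (by linarith) hα).trans_le hq
  have hnβ : 0 < n₁ - β := by linarith
  have hC : 0 < 1 / (n₁ - β) + 1 := by positivity
  refine ⟨1 / (n₁ - β) + 1, hC, fun E hE hE1 hfin s hs => ?_⟩
  set C := 1 / (n₁ - β) + 1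
  set A := ∫ y in E, y ^ (-β) * y ^ (n₁ - 1)
  have hg := integrableOn_rpow_of_mu_lt_top hE hE1 hfin
  have hf := integrableOn_rpow_neg_mul_rpow hE hE1 hg hβ0.le
  have hf0 : ∀ y ∈ E, 0 ≤ y ^ (-β) * y ^ (n₁ - 1) := fun y hy => by
    have : 1 ≤ y := hE1 hy
    positivity
  have hA0 : 0 ≤ A := setIntegral_nonneg hE hf0
  have hA : A ≤ C * (mu n₁ E).toReal ^ (1 / p) := by
    rw [← setIntegral_rpow_eq_toReal_mu hE hE1]
    exact setIntegral_rpow_neg_mul_rpow_le_rpow hE hE1 hg hβ0.le hβ hθ hθ1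
  have hsub := setOf_lt_rpow_neg_mul_subset_Ico hα hs
    (I := fun x => ∫ y in E ∩ Ici x, y ^ (-β) * y ^ (n₁ - 1)) fun x =>
      setIntegral_mono_set hf ((ae_restrict_iff' hE).2 (ae_of_all _ hf0))
        inter_subset_left.eventuallyLE
  calc mu n₂ _ ≤ mu n₂ (Ico 1 ((A / s) ^ (1 / α))) := measure_mono hsub
    _ ≤ ENNReal.ofReal (((A / s) ^ (1 / α)) ^ (α * q)) :=
        mu_Ico_one_le_ofReal_rpow hn₂.le (by rwa [div_le_iff₀' hα] at hq)
    _ = ENNReal.ofReal ((A / s) ^ q) := by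
        rw [← Real.rpow_mul (by positivity)]
        congr 2
        field_simp
    _ ≤ ENNReal.ofReal ((C * (mu n₁ E).toReal ^ (1 / p) / s) ^ q) := by gcongr
    _ = (ENNReal.ofReal C * (mu n₁ E) ^ (1 / p) / ENNReal.ofReal s) ^ q := by
        nth_rw 2 [← ENNReal.ofReal_toReal hfin.ne]
        rw [ENNReal.ofReal_rpow_of_nonneg ENNReal.toReal_nonneg (by positivity),
          ← ENNReal.ofReal_mul hC.le, ← ENNReal.ofReal_div_of_pos hs,
          ENNReal.ofReal_rpow_of_nonneg (by positivity) hq0.le]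

/-- The operator `R₁ χ_E (x) = x^{-α} ∫_{E ∩ [x,∞)} y^{-β} y^{n₁-1} dy` is of restricted
weak type `(p,q)` from `([1,∞), μ_{n₁})` to `([1,∞), μ_{n₂})` whenever `0 < β < n₁`,
`α > 0`, `1 < p ≤ n₁/(n₁-β)` and `q ≥ n₂/α`. -/
theorem R1_restricted_weak_type
    (n₁ n₂ α β p q : ℝ)
    (hn₁ : 1 < n₁) (hn₂ : 1 < n₂)
    (hβ0 : 0 < β) (hβ : β < n₁) (hα : 0 < α)
    (hp1 : 1 < p) (hp2 : p ≤ n₁ / (n₁ - β)) (hq : n₂ / α ≤ q) :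
    ∃ C > 0, ∀ E : Set ℝ, MeasurableSet E → E ⊆ Ici (1 : ℝ) → mu n₁ E < ⊤ →
      ∀ s > 0,
        mu n₂ {x | x ∈ Ici (1 : ℝ) ∧
            s < x ^ (-α) * ∫ y in E ∩ Ici x, y ^ (-β) * y ^ (n₁ - 1)} ≤
          (ENNReal.ofReal C * (mu n₁ E) ^ (1 / p) / ENNReal.ofReal s) ^ q :=
  R1_restricted_weak_type_general n₁ n₂ α β p q hn₂ hβ0 hβ hα hp1 hp2 hq
end

section
/- Let d₁, d₂ > 1 and set d⁎ = min(d₁, d₂). Let μ be the measure on the broken line R̃ = (−∞,−1] ∪ [1,∞) given by dμ(r) = |r|^{d₁−1} dr for r ≤ −1 and dμ(r) = r^{d₂−1} dr for r ≥ 1. Then for every p with 1 ≤ p < d⁎ there is a constant C > 0 such that for every smooth compactly supported function f : ℝ → ℂ satisfying f(−1) = f(1) = 0, one has ∫_{R̃} (|f(x)|/|x|)^p dμ(x) ≤ C ∫_{R̃} |f'(x)|^p dμ(x). -/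
open MeasureTheory Set
open scoped ENNReal

/-- The measure on the broken line `R̃ = (-∞,-1] ∪ [1,∞)` with density `|r|^{d₁-1}` on
`(-∞,-1]` and `r^{d₂-1}` on `[1,∞)` with respect to Lebesgue measure. -/
noncomputable def brokenMeasure (d₁ d₂ : ℝ) : Measure ℝ :=
  (volume.restrict (Iic (-1 : ℝ) ∪ Ici (1 : ℝ))).withDensity
    fun r => ENNReal.ofReal (if r ≤ -1 then |r| ^ (d₁ - 1) else r ^ (d₂ - 1))

namespace HardyAux

lemma lintegral_Ici_rpow_neg {a r : ℝ} (ha : 1 < a) (hr : 0 < r) :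
    ∫⁻ t in Ici r, ENNReal.ofReal (t ^ (-a)) = ENNReal.ofReal (r ^ (1 - a) / (a - 1)) := by
  have h1 : ∫⁻ t in Ici r, ENNReal.ofReal (t ^ (-a)) = ∫⁻ t in Ioi r, ENNReal.ofReal (t ^ (-a)) :=
    (setLIntegral_congr Ioi_ae_eq_Ici).symm
  rw [h1, ← ofReal_integral_eq_lintegral_ofReal (integrableOn_Ioi_rpow_of_lt (by linarith) hr)]
  · rw [integral_Ioi_rpow_of_lt (by linarith) hr]
    congr 1
    rw [show -a + 1 = 1 - a by ring, show (a : ℝ) - 1 = -(1 - a) by ring, div_neg, neg_div]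
  · filter_upwards [ae_restrict_mem measurableSet_Ioi] with t ht
    exact Real.rpow_nonneg (le_of_lt (hr.trans ht)) _

lemma holder_step {g : ℝ → ℝ≥0∞} (hg : Measurable g) {p β : ℝ} (hp : 1 ≤ p)
    (hβ : p - 1 < β) {r : ℝ} (hr : 1 ≤ r) :
    (∫⁻ t in Ici r, g t) ^ p ≤
      ENNReal.ofReal (((β - p + 1) / (p - 1)) ^ (1 - p) * r ^ (p - 1 - β)) *
        ∫⁻ t in Ici r, g t ^ p * ENNReal.ofReal (t ^ β) := by
  have hr0 : (0:ℝ) < r := lt_of_lt_of_le one_pos hr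
  have hβ0 : 0 ≤ β := le_trans (by linarith) hβ.le
  rcases eq_or_lt_of_le hp with hp1 | hp1
  · -- p = 1
    subst hp1
    simp only [ENNReal.rpow_one, sub_self, Real.rpow_zero, one_mul]
    rw [← lintegral_const_mul' _ _ ENNReal.ofReal_ne_top]
    refine setLIntegral_mono' measurableSet_Ici fun t ht => ?_
    have ht0 : (0:ℝ) < t := lt_of_lt_of_le hr0 ht
    have h2 : (1:ℝ) ≤ r ^ (-β) * t ^ β := by
      rw [Real.rpow_neg hr0.le, inv_mul_eq_div, le_div_iff₀ (Real.rpow_pos_of_pos hr0 β), one_mul]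
      exact Real.rpow_le_rpow hr0.le ht hβ0
    calc g t = g t * 1 := (mul_one _).symm
      _ ≤ g t * (ENNReal.ofReal (r ^ (-β)) * ENNReal.ofReal (t ^ β)) := by
          refine mul_le_mul_right ?_ _
          rw [← ENNReal.ofReal_mul (Real.rpow_nonneg hr0.le _)]
          exact ENNReal.one_le_ofReal.mpr h2
      _ = ENNReal.ofReal (r ^ (0 - β)) * (g t * ENNReal.ofReal (t ^ β)) := by
          rw [show (0:ℝ) - β = -β by ring]; ring
  · -- p > 1
    have hp0 : (0:ℝ) < p := by linarith
    have hpm : (0:ℝ) < p - 1 := by linarith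
    set q := p.conjExponent with hqdef
    have hpq : p.HolderConjugate q := Real.HolderConjugate.conjExponent hp1
    have hq : q = p / (p - 1) := rfl
    set a := β / (p - 1) with ha
    have ha1 : 1 < a := (one_lt_div hpm).mpr (by linarith)
    set F : ℝ → ℝ≥0∞ := fun t => g t * ENNReal.ofReal (t ^ (β / p)) with hF
    set H : ℝ → ℝ≥0∞ := fun t => ENNReal.ofReal (t ^ (-(β / p))) with hH
    have hFm : Measurable F := hg.mul (measurable_id.pow_const _).ennreal_ofReal
    have hHm : Measurable H := (measurable_id.pow_const _).ennreal_ofReal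
    have step1 : ∫⁻ t in Ici r, g t = ∫⁻ t in Ici r, (F * H) t := by
      refine setLIntegral_congr_fun_ae measurableSet_Ici (ae_of_all _ fun t ht => ?_)
      have ht0 : (0:ℝ) < t := lt_of_lt_of_le hr0 ht
      simp only [hF, hH, Pi.mul_apply]
      rw [mul_assoc, ← ENNReal.ofReal_mul (Real.rpow_nonneg ht0.le _),
        ← Real.rpow_add ht0, add_neg_cancel, Real.rpow_zero, ENNReal.ofReal_one, mul_one]
    have key := ENNReal.lintegral_mul_le_Lp_mul_Lq (volume.restrict (Ici r)) hpq
      hFm.aemeasurable hHm.aemeasurable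
    have hFp : ∀ t ∈ Ici r, F t ^ p = g t ^ p * ENNReal.ofReal (t ^ β) := by
      intro t ht
      have ht0 : (0:ℝ) < t := lt_of_lt_of_le hr0 ht
      rw [hF, ENNReal.mul_rpow_of_nonneg _ _ hp0.le, ENNReal.ofReal_rpow_of_pos
        (Real.rpow_pos_of_pos ht0 _), ← Real.rpow_mul ht0.le, div_mul_cancel₀ _ hp0.ne']
    have hHq : ∀ t ∈ Ici r, H t ^ q = ENNReal.ofReal (t ^ (-a)) := by
      intro t ht
      have ht0 : (0:ℝ) < t := lt_of_lt_of_le hr0 ht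
      have hexp : -(β / p) * q = -a := by
        rw [hq, ha]; field_simp
      rw [hH, ENNReal.ofReal_rpow_of_pos (Real.rpow_pos_of_pos ht0 _),
        ← Real.rpow_mul ht0.le, hexp]
    have hA : 0 < a - 1 := by linarith
    have ha2 : a - 1 = (β - p + 1) / (p - 1) := by rw [ha]; field_simp; ring
    have hab : (1 - a) * (p - 1) = p - 1 - β := by
      have : a * (p - 1) = β := by rw [ha]; field_simp
      rw [sub_mul, one_mul, this]
    have hB : (0:ℝ) < (β - p + 1) / (p - 1) := by rw [← ha2]; exact hA
    have hY : (0:ℝ) ≤ r ^ (1 - a) / (a - 1) := by positivity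
    have hreal : (r ^ (1 - a) / (a - 1)) ^ (p - 1) =
        ((β - p + 1) / (p - 1)) ^ (1 - p) * r ^ (p - 1 - β) := by
      rw [Real.div_rpow (Real.rpow_nonneg hr0.le _) hA.le, ← Real.rpow_mul hr0.le, hab, ha2,
        show (1:ℝ) - p = -(p - 1) by ring, Real.rpow_neg hB.le, div_eq_mul_inv, mul_comm]
    have hdivq : 1 / q * p = p - 1 := by rw [hq]; field_simp
    have e1 : (∫⁻ t in Ici r, F t ^ p) = ∫⁻ t in Ici r, g t ^ p * ENNReal.ofReal (t ^ β) :=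
      setLIntegral_congr_fun_ae measurableSet_Ici (ae_of_all _ hFp)
    have e2 : (∫⁻ t in Ici r, H t ^ q) = ENNReal.ofReal (r ^ (1 - a) / (a - 1)) := by
      rw [setLIntegral_congr_fun_ae measurableSet_Ici (ae_of_all _ hHq),
        lintegral_Ici_rpow_neg ha1 hr0]
    rw [step1]
    calc (∫⁻ t in Ici r, (F * H) t) ^ p
        ≤ ((∫⁻ t in Ici r, F t ^ p) ^ (1/p) * (∫⁻ t in Ici r, H t ^ q) ^ (1/q)) ^ p :=
          ENNReal.rpow_le_rpow key hp0.le
      _ = (∫⁻ t in Ici r, g t ^ p * ENNReal.ofReal (t ^ β)) *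
            ENNReal.ofReal (r ^ (1 - a) / (a - 1)) ^ (p - 1) := by
          rw [e1, e2, ENNReal.mul_rpow_of_nonneg _ _ hp0.le, ← ENNReal.rpow_mul,
            ← ENNReal.rpow_mul, one_div_mul_cancel hp0.ne', ENNReal.rpow_one, hdivq]
      _ = ENNReal.ofReal (((β - p + 1) / (p - 1)) ^ (1 - p) * r ^ (p - 1 - β)) *
            ∫⁻ t in Ici r, g t ^ p * ENNReal.ofReal (t ^ β) := by
          rw [ENNReal.ofReal_rpow_of_nonneg hY hpm.le, hreal, mul_comm]


lemma tonelli_step {G w : ℝ → ℝ≥0∞} (hG : Measurable G) (hw : Measurable w) :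
    ∫⁻ r in Ici (1:ℝ), (∫⁻ t in Ici r, G t) * w r =
      ∫⁻ t in Ici (1:ℝ), G t * ∫⁻ r in Icc 1 t, w r := by
  set S : Set (ℝ × ℝ) := {q : ℝ × ℝ | 1 ≤ q.1 ∧ q.1 ≤ q.2} with hS
  have hSm : MeasurableSet S :=
    (measurableSet_le measurable_const measurable_fst).inter
      (measurableSet_le measurable_fst measurable_snd)
  set Φ : ℝ × ℝ → ℝ≥0∞ := S.indicator (fun q => G q.2 * w q.1) with hΦ
  have hΦm : Measurable Φ := ((hG.comp measurable_snd).mul (hw.comp measurable_fst)).indicator hSm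
  have lhs_eq : ∫⁻ r in Ici (1:ℝ), (∫⁻ t in Ici r, G t) * w r = ∫⁻ r, ∫⁻ t, Φ (r, t) := by
    rw [← lintegral_indicator measurableSet_Ici]
    congr 1; funext r
    by_cases h1 : (1:ℝ) ≤ r
    · rw [indicator_of_mem (mem_Ici.mpr h1), ← lintegral_indicator measurableSet_Ici,
        ← lintegral_mul_const _ (hG.indicator measurableSet_Ici)]
      congr 1; funext t
      by_cases h2 : r ≤ t
      · rw [indicator_of_mem (mem_Ici.mpr h2), hΦ,
          indicator_of_mem (show (r,t) ∈ S from ⟨h1, h2⟩)]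
      · rw [indicator_of_notMem (fun hc => h2 (mem_Ici.mp hc)), zero_mul, hΦ,
          indicator_of_notMem (fun hc => h2 hc.2)]
    · rw [indicator_of_notMem (fun hc => h1 (mem_Ici.mp hc))]
      have hz : ∀ t, Φ (r, t) = 0 := fun t =>
        indicator_of_notMem (fun hc => h1 hc.1) _
      simp only [hz, lintegral_const, zero_mul]
  have rhs_eq : ∫⁻ t, ∫⁻ r, Φ (r, t) = ∫⁻ t in Ici (1:ℝ), G t * ∫⁻ r in Icc 1 t, w r := by
    rw [← lintegral_indicator measurableSet_Ici]
    congr 1; funext t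
    have hsec : ∀ r, Φ (r, t) = (Icc (1:ℝ) t).indicator (fun r => G t * w r) r := by
      intro r
      by_cases h : r ∈ Icc (1:ℝ) t
      · rw [indicator_of_mem h, hΦ, indicator_of_mem (show (r,t) ∈ S from ⟨h.1, h.2⟩)]
      · rw [indicator_of_notMem h, hΦ, indicator_of_notMem (fun hc => h ⟨hc.1, hc.2⟩)]
    have base : ∫⁻ r, Φ (r, t) = G t * ∫⁻ r in Icc 1 t, w r := by
      rw [lintegral_congr hsec, lintegral_indicator measurableSet_Icc,
        lintegral_const_mul _ hw]
    by_cases h1 : (1:ℝ) ≤ t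
    · rw [indicator_of_mem (mem_Ici.mpr h1), base]
    · rw [indicator_of_notMem (fun hc => h1 (mem_Ici.mp hc)), base, Icc_eq_empty h1, setLIntegral_empty, mul_zero]
  rw [lhs_eq, ← rhs_eq]
  exact lintegral_lintegral_swap (f := fun r t => Φ (r, t)) hΦm.aemeasurable

lemma lintegral_Icc_rpow_le {c t : ℝ} (hc : -1 < c) (ht : 1 ≤ t) :
    ∫⁻ r in Icc (1:ℝ) t, ENNReal.ofReal (r ^ c) ≤ ENNReal.ofReal (t ^ (c + 1) / (c + 1)) := by
  have hint : IntegrableOn (fun r : ℝ => r ^ c) (Icc 1 t) := by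
    apply ContinuousOn.integrableOn_compact isCompact_Icc
    exact ContinuousOn.rpow_const continuousOn_id fun x hx => Or.inl (by
      have : (1:ℝ) ≤ x := hx.1; positivity)
  rw [← ofReal_integral_eq_lintegral_ofReal hint]
  · apply ENNReal.ofReal_le_ofReal
    rw [integral_Icc_eq_integral_Ioc, ← intervalIntegral.integral_of_le ht,
      integral_rpow (Or.inl hc), Real.one_rpow]
    have hc1 : (0:ℝ) < c + 1 := by linarith
    gcongr
    exact sub_le_self _ zero_le_one
  · filter_upwards [ae_restrict_mem measurableSet_Icc] with x hx
    have : (1:ℝ) ≤ x := hx.1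
    positivity

lemma hardy_halfline {d p : ℝ} (hp1 : 1 ≤ p) (hpd : p < d) :
    ∃ C > 0, ∀ g : ℝ → ℝ≥0∞, Measurable g →
      ∫⁻ r in Ici (1:ℝ), (∫⁻ t in Ici r, g t) ^ p * ENNReal.ofReal (r ^ (d - 1 - p)) ≤
        ENNReal.ofReal C * ∫⁻ r in Ici (1:ℝ), g r ^ p * ENNReal.ofReal (r ^ (d - 1)) := by
  have hd1 : 1 < d := lt_of_le_of_lt hp1 hpd
  set β : ℝ := (p + d) / 2 - 1 with hβdef
  have hβ1 : p - 1 < β := by simp only [hβdef]; linarith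
  have hβ2 : β < d - 1 := by simp only [hβdef]; linarith
  have hβ0 : 0 ≤ β := le_trans (by linarith) hβ1.le
  have hc₁ : 0 < ((β - p + 1) / (p - 1)) ^ (1 - p) := by
    rcases eq_or_lt_of_le hp1 with h | h
    · rw [← h]; norm_num
    · exact Real.rpow_pos_of_pos (div_pos (by linarith) (by linarith)) _
  have hden : 0 < d - 1 - β := by linarith
  refine ⟨((β - p + 1) / (p - 1)) ^ (1 - p) * (1 / (d - 1 - β)), by positivity, fun g hg => ?_⟩
  set G : ℝ → ℝ≥0∞ := fun t => g t ^ p * ENNReal.ofReal (t ^ β) with hG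
  have hGm : Measurable G := (hg.pow_const _).mul (measurable_id.pow_const _).ennreal_ofReal
  have stepA : ∫⁻ r in Ici (1:ℝ), (∫⁻ t in Ici r, g t) ^ p * ENNReal.ofReal (r ^ (d - 1 - p)) ≤
      ENNReal.ofReal (((β - p + 1) / (p - 1)) ^ (1 - p)) *
        ∫⁻ r in Ici (1:ℝ), (∫⁻ t in Ici r, G t) * ENNReal.ofReal (r ^ (d - 2 - β)) := by
    rw [← lintegral_const_mul' _ _ ENNReal.ofReal_ne_top]
    refine setLIntegral_mono' measurableSet_Ici fun r hr => ?_
    have hr1 : (1:ℝ) ≤ r := hr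
    have hr0 : (0:ℝ) < r := by linarith
    calc (∫⁻ t in Ici r, g t) ^ p * ENNReal.ofReal (r ^ (d - 1 - p))
        ≤ (ENNReal.ofReal (((β - p + 1) / (p - 1)) ^ (1 - p) * r ^ (p - 1 - β)) *
            ∫⁻ t in Ici r, G t) * ENNReal.ofReal (r ^ (d - 1 - p)) :=
          mul_le_mul_left (holder_step hg hp1 hβ1 hr1) _
      _ = ENNReal.ofReal (((β - p + 1) / (p - 1)) ^ (1 - p)) *
            ((∫⁻ t in Ici r, G t) * ENNReal.ofReal (r ^ (d - 2 - β))) := by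
          rw [ENNReal.ofReal_mul hc₁.le,
            show (d:ℝ) - 2 - β = (p - 1 - β) + (d - 1 - p) by ring, Real.rpow_add hr0,
            ENNReal.ofReal_mul (Real.rpow_nonneg hr0.le _)]
          ring
  have stepB : ∫⁻ r in Ici (1:ℝ), (∫⁻ t in Ici r, G t) * ENNReal.ofReal (r ^ (d - 2 - β)) =
      ∫⁻ t in Ici (1:ℝ), G t * ∫⁻ r in Icc 1 t, ENNReal.ofReal (r ^ (d - 2 - β)) :=
    tonelli_step hGm (measurable_id.pow_const _).ennreal_ofReal
  have stepC : ∫⁻ t in Ici (1:ℝ), G t * ∫⁻ r in Icc 1 t, ENNReal.ofReal (r ^ (d - 2 - β)) ≤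
      ENNReal.ofReal (1 / (d - 1 - β)) *
        ∫⁻ t in Ici (1:ℝ), g t ^ p * ENNReal.ofReal (t ^ (d - 1)) := by
    rw [← lintegral_const_mul' _ _ ENNReal.ofReal_ne_top]
    refine setLIntegral_mono' measurableSet_Ici fun t ht => ?_
    have ht1 : (1:ℝ) ≤ t := ht
    have ht0 : (0:ℝ) < t := by linarith
    calc G t * ∫⁻ r in Icc 1 t, ENNReal.ofReal (r ^ (d - 2 - β))
        ≤ G t * ENNReal.ofReal (t ^ (d - 1 - β) / (d - 1 - β)) := by
          refine mul_le_mul_right ?_ _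
          have h := lintegral_Icc_rpow_le (show (-1:ℝ) < d - 2 - β by linarith) ht1
          rwa [show d - 2 - β + 1 = d - 1 - β by ring] at h
      _ = ENNReal.ofReal (1 / (d - 1 - β)) * (g t ^ p * ENNReal.ofReal (t ^ (d - 1))) := by
          have e : t ^ (d - 1 - β) / (d - 1 - β) = 1 / (d - 1 - β) * t ^ (d - 1 - β) := by ring
          have e2 : (t:ℝ) ^ (d - 1) = t ^ β * t ^ (d - 1 - β) := by
            rw [← Real.rpow_add ht0]; congr 1; ring
          rw [hG, e, ENNReal.ofReal_mul (by positivity), e2,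
            ENNReal.ofReal_mul (Real.rpow_nonneg ht0.le _)]
          ring
  calc ∫⁻ r in Ici (1:ℝ), (∫⁻ t in Ici r, g t) ^ p * ENNReal.ofReal (r ^ (d - 1 - p))
      ≤ ENNReal.ofReal (((β - p + 1) / (p - 1)) ^ (1 - p)) *
          ∫⁻ r in Ici (1:ℝ), (∫⁻ t in Ici r, G t) * ENNReal.ofReal (r ^ (d - 2 - β)) := stepA
    _ ≤ ENNReal.ofReal (((β - p + 1) / (p - 1)) ^ (1 - p)) *
          (ENNReal.ofReal (1 / (d - 1 - β)) *
            ∫⁻ t in Ici (1:ℝ), g t ^ p * ENNReal.ofReal (t ^ (d - 1))) := by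
        rw [stepB]; exact mul_le_mul_right stepC _
    _ = ENNReal.ofReal (((β - p + 1) / (p - 1)) ^ (1 - p) * (1 / (d - 1 - β))) *
          ∫⁻ r in Ici (1:ℝ), g r ^ p * ENNReal.ofReal (r ^ (d - 1)) := by
        rw [ENNReal.ofReal_mul hc₁.le, mul_assoc]

lemma norm_le_lintegral_deriv {f : ℝ → ℂ} (hf : ContDiff ℝ (⊤ : ℕ∞) f) (hcs : HasCompactSupport f)
    (r : ℝ) :
    ENNReal.ofReal ‖f r‖ ≤ ∫⁻ t in Ici r, ENNReal.ofReal ‖deriv f t‖ := by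
  have hder : Continuous (deriv f) := hf.continuous_deriv (by simp)
  obtain ⟨R, hR⟩ : ∃ R : ℝ, tsupport f ⊆ Metric.closedBall 0 R :=
    (hcs.isBounded).subset_closedBall 0
  set T : ℝ := max r (R + 1) with hT
  have hrT : r ≤ T := le_max_left _ _
  have hfT : f T = 0 := by
    apply image_eq_zero_of_notMem_tsupport
    intro hmem
    have := hR hmem
    rw [Metric.mem_closedBall, Real.dist_eq, sub_zero] at this
    have h1 : R + 1 ≤ T := le_max_right _ _
    have h2 : T ≤ |T| := le_abs_self _
    linarith
  have hftc : ∫ t in r..T, deriv f t = f T - f r :=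
    intervalIntegral.integral_deriv_eq_sub
      (fun x _ => (hf.differentiable (by simp)).differentiableAt)
      (hder.intervalIntegrable r T)
  have h1 : ‖f r‖ = ‖∫ t in r..T, deriv f t‖ := by
    rw [hftc, hfT, zero_sub, norm_neg]
  have h2 : ‖∫ t in r..T, deriv f t‖ ≤ ∫ t in r..T, ‖deriv f t‖ :=
    intervalIntegral.norm_integral_le_integral_norm hrT
  have h3 : ENNReal.ofReal (∫ t in r..T, ‖deriv f t‖) =
      ∫⁻ t in Ioc r T, ENNReal.ofReal ‖deriv f t‖ := by
    rw [intervalIntegral.integral_of_le hrT]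
    exact ofReal_integral_eq_lintegral_ofReal (hder.norm.integrableOn_Ioc)
      (ae_of_all _ fun t => norm_nonneg _)
  calc ENNReal.ofReal ‖f r‖ ≤ ENNReal.ofReal (∫ t in r..T, ‖deriv f t‖) := by
        rw [h1]; exact ENNReal.ofReal_le_ofReal h2
    _ = ∫⁻ t in Ioc r T, ENNReal.ofReal ‖deriv f t‖ := h3
    _ ≤ ∫⁻ t in Ici r, ENNReal.ofReal ‖deriv f t‖ :=
        lintegral_mono_set (Ioc_subset_Icc_self.trans Icc_subset_Ici_self)

lemma lintegral_Iic_neg (φ : ℝ → ℝ≥0∞) :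
    ∫⁻ x in Iic (-1:ℝ), φ x = ∫⁻ y in Ici (1:ℝ), φ (-y) := by
  have h := (Measure.measurePreserving_neg (volume : Measure ℝ)).setLIntegral_comp_preimage_emb
    (MeasurableEquiv.neg ℝ).measurableEmbedding φ (Iic (-1))
  rw [← h]
  congr 1
  ext y
  simp [neg_le]

lemma hardy_half_f {d p : ℝ} (hp1 : 1 ≤ p) (hpd : p < d) :
    ∃ C > 0, ∀ f : ℝ → ℂ, ContDiff ℝ (⊤ : ℕ∞) f → HasCompactSupport f →
      ∫⁻ x in Ici (1:ℝ), ENNReal.ofReal (x ^ (d - 1)) * ENNReal.ofReal ((‖f x‖ / x) ^ p) ≤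
        ENNReal.ofReal C *
          ∫⁻ x in Ici (1:ℝ), ENNReal.ofReal (x ^ (d - 1)) * ENNReal.ofReal (‖deriv f x‖ ^ p) := by
  have hp0 : (0:ℝ) < p := by linarith
  obtain ⟨C, hC, hHardy⟩ := hardy_halfline hp1 hpd
  refine ⟨C, hC, fun f hf hcs => ?_⟩
  set g : ℝ → ℝ≥0∞ := fun t => ENNReal.ofReal ‖deriv f t‖ with hg
  have hgm : Measurable g := (hf.continuous_deriv (by simp)).norm.measurable.ennreal_ofReal
  have e1 : ∫⁻ x in Ici (1:ℝ), ENNReal.ofReal (x ^ (d - 1)) * ENNReal.ofReal ((‖f x‖ / x) ^ p) =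
      ∫⁻ x in Ici (1:ℝ), ENNReal.ofReal ‖f x‖ ^ p * ENNReal.ofReal (x ^ (d - 1 - p)) := by
    refine setLIntegral_congr_fun_ae measurableSet_Ici (ae_of_all _ fun x hx => ?_)
    have hx1 : (1:ℝ) ≤ x := hx
    have hx0 : (0:ℝ) < x := by linarith
    rw [ENNReal.ofReal_rpow_of_nonneg (norm_nonneg _) hp0.le,
      ← ENNReal.ofReal_mul (Real.rpow_nonneg hx0.le _),
      ← ENNReal.ofReal_mul (Real.rpow_nonneg (norm_nonneg _) _)]
    congr 1
    rw [Real.div_rpow (norm_nonneg _) hx0.le,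
      show d - 1 - p = (d - 1) + (-p) by ring, Real.rpow_add hx0, Real.rpow_neg hx0.le]
    field_simp
  have e2 : ∫⁻ x in Ici (1:ℝ), g x ^ p * ENNReal.ofReal (x ^ (d - 1)) =
      ∫⁻ x in Ici (1:ℝ), ENNReal.ofReal (x ^ (d - 1)) * ENNReal.ofReal (‖deriv f x‖ ^ p) := by
    refine setLIntegral_congr_fun_ae measurableSet_Ici (ae_of_all _ fun x hx => ?_)
    simp only [hg]
    rw [ENNReal.ofReal_rpow_of_nonneg (norm_nonneg _) hp0.le, mul_comm]
  rw [e1, ← e2]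
  calc ∫⁻ x in Ici (1:ℝ), ENNReal.ofReal ‖f x‖ ^ p * ENNReal.ofReal (x ^ (d - 1 - p))
      ≤ ∫⁻ x in Ici (1:ℝ), (∫⁻ t in Ici x, g t) ^ p * ENNReal.ofReal (x ^ (d - 1 - p)) := by
        refine lintegral_mono fun x => ?_
        exact mul_le_mul_left
          (ENNReal.rpow_le_rpow (norm_le_lintegral_deriv hf hcs x) hp0.le) _
    _ ≤ ENNReal.ofReal C * ∫⁻ x in Ici (1:ℝ), g x ^ p * ENNReal.ofReal (x ^ (d - 1)) :=
        hHardy g hgm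

end HardyAux


/-- Hardy's inequality on the broken line: for `1 ≤ p < min(d₁,d₂)` there is `C > 0`
such that `∫ (|f(x)|/|x|)^p dμ ≤ C ∫ |f'(x)|^p dμ` for every smooth compactly supported
`f : ℝ → ℂ` with `f(-1) = f(1) = 0`. -/
theorem hardy_inequality_broken_line
    (d₁ d₂ : ℝ) (hd₁ : 1 < d₁) (hd₂ : 1 < d₂)
    (p : ℝ) (hp1 : 1 ≤ p) (hp2 : p < min d₁ d₂) :
    ∃ C > 0, ∀ f : ℝ → ℂ, ContDiff ℝ (⊤ : ℕ∞) f → HasCompactSupport f →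
      f (-1) = 0 → f 1 = 0 →
      ∫⁻ x, ENNReal.ofReal ((‖f x‖ / |x|) ^ p) ∂(brokenMeasure d₁ d₂) ≤
        ENNReal.ofReal C * ∫⁻ x, ENNReal.ofReal (‖deriv f x‖ ^ p) ∂(brokenMeasure d₁ d₂) := by
  obtain ⟨C₁, hC₁, H₁⟩ := HardyAux.hardy_half_f (d := d₁) hp1 (hp2.trans_le (min_le_left _ _))
  obtain ⟨C₂, hC₂, H₂⟩ := HardyAux.hardy_half_f (d := d₂) hp1 (hp2.trans_le (min_le_right _ _))
  refine ⟨max C₁ C₂, lt_max_of_lt_left hC₁, fun f hf hcs _ _ => ?_⟩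
  have hfc : Continuous f := hf.continuous
  have hdc : Continuous (deriv f) := hf.continuous_deriv (by simp)
  set W : ℝ → ℝ≥0∞ :=
    fun r => ENNReal.ofReal (if r ≤ -1 then |r| ^ (d₁ - 1) else r ^ (d₂ - 1)) with hW
  have hWm : Measurable W := by
    apply Measurable.ennreal_ofReal
    exact Measurable.ite (measurableSet_le measurable_id measurable_const)
      (continuous_abs.measurable.pow_const _) (measurable_id.pow_const _)
  have hFm : Measurable fun x : ℝ => ENNReal.ofReal ((‖f x‖ / |x|) ^ p) :=
    ((hfc.norm.measurable.div continuous_abs.measurable).pow_const _).ennreal_ofReal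
  have hDm : Measurable fun x : ℝ => ENNReal.ofReal (‖deriv f x‖ ^ p) :=
    (hdc.norm.measurable.pow_const _).ennreal_ofReal
  have hsplit : ∀ h : ℝ → ℝ≥0∞, Measurable h →
      ∫⁻ x, h x ∂(brokenMeasure d₁ d₂) =
        (∫⁻ x in Iic (-1:ℝ), W x * h x) + ∫⁻ x in Ici (1:ℝ), W x * h x := by
    intro h hm
    rw [brokenMeasure, lintegral_withDensity_eq_lintegral_mul _ hWm hm,
      lintegral_union measurableSet_Ici (Iic_disjoint_Ici.mpr (by norm_num))]
    rfl
  -- the reflected function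
  set F : ℝ → ℂ := fun y => f (-y) with hFdef
  have hFsm : ContDiff ℝ (⊤ : ℕ∞) F := hf.comp contDiff_neg
  have hFcs : HasCompactSupport F := hcs.comp_homeomorph (Homeomorph.neg ℝ)
  have hderF : ∀ y : ℝ, ‖deriv F y‖ = ‖deriv f (-y)‖ := by
    intro y
    have : deriv F y = -deriv f (-y) := deriv_comp_neg (f := f) (x := y)
    rw [this, norm_neg]
  -- left pieces
  have eL : ∫⁻ x in Iic (-1:ℝ), W x * ENNReal.ofReal ((‖f x‖ / |x|) ^ p) =
      ∫⁻ y in Ici (1:ℝ), ENNReal.ofReal (y ^ (d₁ - 1)) * ENNReal.ofReal ((‖F y‖ / y) ^ p) := by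
    rw [HardyAux.lintegral_Iic_neg]
    refine setLIntegral_congr_fun_ae measurableSet_Ici (ae_of_all _ fun y hy => ?_)
    have hy1 : (1:ℝ) ≤ y := hy
    rw [hW]
    simp only []
    rw [if_pos (by linarith : -y ≤ -1), abs_neg, abs_of_nonneg (by linarith : (0:ℝ) ≤ y)]
  have eLd : ∫⁻ x in Iic (-1:ℝ), W x * ENNReal.ofReal (‖deriv f x‖ ^ p) =
      ∫⁻ y in Ici (1:ℝ), ENNReal.ofReal (y ^ (d₁ - 1)) * ENNReal.ofReal (‖deriv F y‖ ^ p) := by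
    rw [HardyAux.lintegral_Iic_neg]
    refine setLIntegral_congr_fun_ae measurableSet_Ici (ae_of_all _ fun y hy => ?_)
    have hy1 : (1:ℝ) ≤ y := hy
    rw [hW, hderF y]
    simp only []
    rw [if_pos (by linarith : -y ≤ -1), abs_neg, abs_of_nonneg (by linarith : (0:ℝ) ≤ y)]
  -- right pieces
  have eR : ∫⁻ x in Ici (1:ℝ), W x * ENNReal.ofReal ((‖f x‖ / |x|) ^ p) =
      ∫⁻ x in Ici (1:ℝ), ENNReal.ofReal (x ^ (d₂ - 1)) * ENNReal.ofReal ((‖f x‖ / x) ^ p) := by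
    refine setLIntegral_congr_fun_ae measurableSet_Ici (ae_of_all _ fun x hx => ?_)
    have hx1 : (1:ℝ) ≤ x := hx
    rw [hW]
    simp only []
    rw [if_neg (by linarith : ¬ x ≤ -1), abs_of_nonneg (by linarith : (0:ℝ) ≤ x)]
  have eRd : ∫⁻ x in Ici (1:ℝ), W x * ENNReal.ofReal (‖deriv f x‖ ^ p) =
      ∫⁻ x in Ici (1:ℝ), ENNReal.ofReal (x ^ (d₂ - 1)) * ENNReal.ofReal (‖deriv f x‖ ^ p) := by
    refine setLIntegral_congr_fun_ae measurableSet_Ici (ae_of_all _ fun x hx => ?_)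
    have hx1 : (1:ℝ) ≤ x := hx
    rw [hW]
    simp only []
    rw [if_neg (by linarith : ¬ x ≤ -1)]
  have hmax1 : ENNReal.ofReal C₁ ≤ ENNReal.ofReal (max C₁ C₂) :=
    ENNReal.ofReal_le_ofReal (le_max_left _ _)
  have hmax2 : ENNReal.ofReal C₂ ≤ ENNReal.ofReal (max C₁ C₂) :=
    ENNReal.ofReal_le_ofReal (le_max_right _ _)
  rw [hsplit _ hFm, hsplit _ hDm, eL, eR, eLd, eRd]
  calc (∫⁻ y in Ici (1:ℝ), ENNReal.ofReal (y ^ (d₁ - 1)) * ENNReal.ofReal ((‖F y‖ / y) ^ p)) +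
        ∫⁻ x in Ici (1:ℝ), ENNReal.ofReal (x ^ (d₂ - 1)) * ENNReal.ofReal ((‖f x‖ / x) ^ p)
      ≤ (ENNReal.ofReal C₁ *
            ∫⁻ y in Ici (1:ℝ), ENNReal.ofReal (y ^ (d₁ - 1)) * ENNReal.ofReal (‖deriv F y‖ ^ p)) +
          ENNReal.ofReal C₂ *
            ∫⁻ x in Ici (1:ℝ), ENNReal.ofReal (x ^ (d₂ - 1)) * ENNReal.ofReal (‖deriv f x‖ ^ p) :=
        add_le_add (H₁ F hFsm hFcs) (H₂ f hf hcs)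
    _ ≤ ENNReal.ofReal (max C₁ C₂) *
          ((∫⁻ y in Ici (1:ℝ), ENNReal.ofReal (y ^ (d₁ - 1)) * ENNReal.ofReal (‖deriv F y‖ ^ p)) +
            ∫⁻ x in Ici (1:ℝ), ENNReal.ofReal (x ^ (d₂ - 1)) * ENNReal.ofReal (‖deriv f x‖ ^ p)) := by
        rw [mul_add]
        exact add_le_add (mul_le_mul_left hmax1 _) (mul_le_mul_left hmax2 _)
end

section
/- Let d > 1 and 1 ≤ p < d. Then for every continuously differentiable, compactly supported function f on [1,∞) one has ∫₁^∞ |f(x)/x|^p x^{d−1} dx ≤ (p/(d−p))^p ∫₁^∞ |f'(t)|^p t^{d−1} dt. -/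
/-!
By the fundamental theorem of calculus `|f(x)| ≤ ∫_x^∞ |f'|`, and Hölder's inequality against the
weight `t^{-d/p}` turns this into `|f(x)|^p ≤ c^{1-p} x^{-c(p-1)} ∫_x^∞ |f'(t)|^p t^{d(p-1)/p} dt`
with `c = d/p - 1 > 0`. Multiplying by `x^{d-1-p}` leaves `c^{1-p} x^{c-1}` times the tail integral,
and integrating by parts, `∫₁^∞ x^{c-1} ∫_x^∞ h ≤ c⁻¹ ∫₁^∞ t^c h(t) dt` for `h ≥ 0`. The powers of
`t` recombine to `t^{d-1}` and the constant is `c^{-p} = (p/(d-p))^p`.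
-/

open MeasureTheory Set Filter

theorem MeasureTheory.memLp_ofReal_of_integrable_rpow {α : Type*} [MeasurableSpace α]
    {μ : Measure α} {p : ℝ} {f : α → ℝ} (hp : 0 < p) (hf : AEStronglyMeasurable f μ)
    (hf0 : 0 ≤ᵐ[μ] f) (hi : Integrable (fun a => f a ^ p) μ) :
    MemLp f (ENNReal.ofReal p) μ := by
  have hp0 : ENNReal.ofReal p ≠ 0 := by simpa using hp
  rw [← memLp_norm_rpow_iff hf hp0 ENNReal.ofReal_ne_top,
    ENNReal.div_self hp0 ENNReal.ofReal_ne_top, memLp_one_iff_integrable,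
    ENNReal.toReal_ofReal hp.le]
  refine hi.congr ?_
  filter_upwards [hf0] with a ha
  rw [Real.norm_of_nonneg ha]

theorem MeasureTheory.rpow_integral_abs_le_rpow_integral_mul_integral {α : Type*}
    [MeasurableSpace α] {μ : Measure α} {p : ℝ} (hp : 1 ≤ p) {u w : α → ℝ}
    (hu : AEStronglyMeasurable u μ) (hw_pos : ∀ᵐ a ∂μ, 0 < w a) (hw : Integrable w μ)
    (huw : Integrable (fun a => |u a| ^ p * w a ^ (1 - p)) μ) :
    (∫ a, |u a| ∂μ) ^ p ≤ (∫ a, w a ∂μ) ^ (p - 1) * ∫ a, |u a| ^ p * w a ^ (1 - p) ∂μ := by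
  rcases hp.eq_or_lt with rfl | hp
  · simp
  have hp0 : 0 < p := by linarith
  have hpq : p.HolderConjugate (p / (p - 1)) := .conjExponent hp
  set q := p / (p - 1)
  have hq : 1 / q = (p - 1) / p := one_div_div _ _
  -- Hölder's inequality for `|u| = (|u| w^{(1-p)/p}) · w^{1/q}`
  set F : α → ℝ := fun a => |u a| * w a ^ ((1 - p) / p)
  set H : α → ℝ := fun a => w a ^ (1 / q)
  have hFH : ∀ᵐ a ∂μ, F a * H a = |u a| := by
    filter_upwards [hw_pos] with a ha
    rw [mul_assoc, ← Real.rpow_add ha, hq, ← add_div, sub_add_sub_cancel', sub_self, zero_div,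
      Real.rpow_zero, mul_one]
  have hFp : ∀ᵐ a ∂μ, F a ^ p = |u a| ^ p * w a ^ (1 - p) := by
    filter_upwards [hw_pos] with a ha
    rw [Real.mul_rpow (abs_nonneg _) (Real.rpow_nonneg ha.le _), ← Real.rpow_mul ha.le,
      div_mul_cancel₀ _ hp0.ne']
  have hHq : ∀ᵐ a ∂μ, H a ^ q = w a := by
    filter_upwards [hw_pos] with a ha
    rw [← Real.rpow_mul ha.le, one_div_mul_cancel hpq.symm.ne_zero, Real.rpow_one]
  have hF0 : 0 ≤ᵐ[μ] F := by
    filter_upwards [hw_pos] with a ha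
    exact mul_nonneg (abs_nonneg _) (Real.rpow_nonneg ha.le _)
  have hH0 : 0 ≤ᵐ[μ] H := by
    filter_upwards [hw_pos] with a ha
    exact Real.rpow_nonneg ha.le _
  have hF : MemLp F (ENNReal.ofReal p) μ :=
    memLp_ofReal_of_integrable_rpow hp0
      (hu.aemeasurable.abs.mul (hw.aemeasurable.pow_const _)).aestronglyMeasurable hF0
      (huw.congr (hFp.mono fun _ h => h.symm))
  have hH : MemLp H (ENNReal.ofReal q) μ :=
    memLp_ofReal_of_integrable_rpow hpq.symm.pos
      (hw.aemeasurable.pow_const _).aestronglyMeasurable hH0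
      (hw.congr (hHq.mono fun _ h => h.symm))
  have holder := integral_mul_le_Lp_mul_Lq_of_nonneg hpq hF0 hH0 hF hH
  rw [integral_congr_ae hFH, integral_congr_ae hFp, integral_congr_ae hHq] at holder
  have hI : 0 ≤ ∫ a, |u a| ^ p * w a ^ (1 - p) ∂μ :=
    integral_nonneg_of_ae <| by
      filter_upwards [hF0, hFp] with a ha h
      exact h ▸ Real.rpow_nonneg ha _
  have hW : 0 ≤ ∫ a, w a ∂μ := integral_nonneg_of_ae (hw_pos.mono fun _ h => h.le)
  calc (∫ a, |u a| ∂μ) ^ p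
      ≤ ((∫ a, |u a| ^ p * w a ^ (1 - p) ∂μ) ^ (1 / p) * (∫ a, w a ∂μ) ^ (1 / q)) ^ p :=
        Real.rpow_le_rpow (integral_nonneg fun _ => abs_nonneg _) holder hp0.le
    _ = (∫ a, w a ∂μ) ^ (p - 1) * ∫ a, |u a| ^ p * w a ^ (1 - p) ∂μ := by
      rw [Real.mul_rpow (Real.rpow_nonneg hI _) (Real.rpow_nonneg hW _), ← Real.rpow_mul hI,
        ← Real.rpow_mul hW, one_div_mul_cancel hp0.ne', Real.rpow_one, hq,
        div_mul_cancel₀ _ hp0.ne', mul_comm]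

theorem HasCompactSupport.eventuallyEq_zero_atTop {β : Type*} [Zero β] {f : ℝ → β}
    (hf : HasCompactSupport f) : f =ᶠ[atTop] 0 := by
  rw [hasCompactSupport_iff_eventuallyEq, coclosedCompact_eq_cocompact] at hf
  exact hf.filter_mono atTop_le_cocompact

theorem HasCompactSupport.abs_rpow_mul {u v : ℝ → ℝ} (hu : HasCompactSupport u) {p : ℝ}
    (hp : p ≠ 0) : HasCompactSupport fun t => |u t| ^ p * v t :=
  (hu.comp_left (g := fun y => |y| ^ p) (by rw [abs_zero, Real.zero_rpow hp])).mul_right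

theorem Continuous.abs_rpow_mul_rpow {u : ℝ → ℝ} (hu : Continuous u) {p r : ℝ} (hp : 0 ≤ p)
    (hr : 0 ≤ r) : Continuous fun t => |u t| ^ p * t ^ r :=
  (hu.abs.rpow_const fun _ => Or.inr hp).mul (Real.continuous_rpow_const hr)

theorem integrableOn_Ioi_of_continuousOn_of_eventuallyEq_zero {E : Type*}
    [NormedAddCommGroup E] {g : ℝ → E} {a : ℝ} (hg : ContinuousOn g (Ici a))
    (h0 : g =ᶠ[atTop] 0) : IntegrableOn g (Ioi a) := by
  obtain ⟨M, hM⟩ := eventually_atTop.1 h0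
  refine ((hg.mono Icc_subset_Ici_self).integrableOn_Icc (b := M)).of_forall_sdiff_eq_zero
    measurableSet_Ioi fun x hx => hM x ?_
  by_contra! h
  exact hx.2 ⟨hx.1.out.le, h.le⟩

section TailIntegral

variable {E : Type*} [NormedAddCommGroup E] [NormedSpace ℝ E] {g : ℝ → E}

theorem integral_Ioi_eventuallyEq_zero (h0 : g =ᶠ[atTop] 0) :
    (fun y => ∫ t in Ioi y, g t) =ᶠ[atTop] 0 := by
  obtain ⟨M, hM⟩ := eventually_atTop.1 h0
  filter_upwards [eventually_ge_atTop M] with y hy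
  exact setIntegral_eq_zero_of_forall_eq_zero fun t ht => hM t (hy.trans ht.out.le)

theorem hasDerivAt_integral_Ioi [CompleteSpace E] (hg : Continuous g) (hgi : Integrable g)
    (x : ℝ) : HasDerivAt (fun y => ∫ t in Ioi y, g t) (-g x) x := by
  have h : (fun y => ∫ t in Ioi y, g t) = fun y => (∫ t in Ioi x, g t) - ∫ t in x..y, g t := by
    ext y
    rw [← intervalIntegral.integral_Ioi_sub_Ioi' hgi.integrableOn hgi.integrableOn,
      sub_sub_cancel]
  rw [h]
  exact (intervalIntegral.integral_hasDerivAt_right (hg.intervalIntegrable _ _)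
    hg.aestronglyMeasurable.stronglyMeasurableAtFilter hg.continuousAt).const_sub _

end TailIntegral

section WeightedTailIntegral

variable {g : ℝ → ℝ} {a : ℝ}

theorem integrableOn_Ioi_rpow_mul_integral_Ioi (ha : 0 < a) (hg : Continuous g)
    (hgs : HasCompactSupport g) (r : ℝ) :
    IntegrableOn (fun x => x ^ r * ∫ t in Ioi x, g t) (Ioi a) := by
  refine integrableOn_Ioi_of_continuousOn_of_eventuallyEq_zero ?_ ?_
  · exact (continuousOn_id.rpow_const fun x hx => Or.inl (ha.trans_le hx).ne').mul
      (continuous_iff_continuousAt.2 fun x => (hasDerivAt_integral_Ioi hg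
        (hg.integrable_of_hasCompactSupport hgs) x).continuousAt).continuousOn
  · filter_upwards [integral_Ioi_eventuallyEq_zero hgs.eventuallyEq_zero_atTop] with x hx
    simp [hx]

theorem integral_Ioi_rpow_mul_integral_Ioi (ha : 0 < a) {c : ℝ} (hc : c ≠ 0)
    (hg : Continuous g) (hgs : HasCompactSupport g) :
    ∫ x in Ioi a, x ^ (c - 1) * ∫ t in Ioi x, g t =
      ((∫ t in Ioi a, t ^ c * g t) - a ^ c * ∫ t in Ioi a, g t) / c := by
  set G : ℝ → ℝ := fun y => ∫ t in Ioi y, g t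
  have hderiv : ∀ x ∈ Ici a, HasDerivAt (fun y => y ^ c / c * G y)
      (x ^ (c - 1) * G x - x ^ c * g x / c) x := fun x hx =>
    (((Real.hasDerivAt_rpow_const (Or.inl (ha.trans_le hx).ne')).div_const c).mul
      (hasDerivAt_integral_Ioi hg (hg.integrable_of_hasCompactSupport hgs) x)).congr_deriv
      (by field_simp; ring)
  have hint₁ := integrableOn_Ioi_rpow_mul_integral_Ioi ha hg hgs (c - 1)
  have hint₂ : IntegrableOn (fun t => t ^ c * g t) (Ioi a) :=
    integrableOn_Ioi_of_continuousOn_of_eventuallyEq_zero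
      ((continuousOn_id.rpow_const fun x hx => Or.inl (ha.trans_le hx).ne').mul hg.continuousOn)
      (by filter_upwards [hgs.eventuallyEq_zero_atTop] with t ht; simp [ht])
  have htendsto : Tendsto (fun y => y ^ c / c * G y) atTop (nhds 0) := by
    refine tendsto_const_nhds.congr' ?_
    filter_upwards [integral_Ioi_eventuallyEq_zero hgs.eventuallyEq_zero_atTop] with y hy
    simp [G, hy]
  have hftc := integral_Ioi_of_hasDerivAt_of_tendsto' hderiv
    (hint₁.sub (hint₂.div_const c)) htendsto
  rw [integral_sub hint₁ (hint₂.div_const c), integral_div] at hftc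
  simp only [G] at hftc
  field_simp at hftc ⊢
  linarith

theorem integral_Ioi_rpow_mul_integral_Ioi_le (ha : 0 < a) {c : ℝ} (hc : 0 < c)
    (hg : Continuous g) (hgs : HasCompactSupport g) (hg0 : ∀ t ∈ Ioi a, 0 ≤ g t) :
    ∫ x in Ioi a, x ^ (c - 1) * ∫ t in Ioi x, g t ≤ (∫ t in Ioi a, t ^ c * g t) / c := by
  rw [integral_Ioi_rpow_mul_integral_Ioi ha hc.ne' hg hgs]
  gcongr
  exact sub_le_self _
    (mul_nonneg (Real.rpow_nonneg ha.le _) (setIntegral_nonneg measurableSet_Ioi hg0))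

end WeightedTailIntegral

theorem rpow_integral_Ioi_abs_le {u : ℝ → ℝ} {x p s : ℝ} (hx : 0 < x) (hp : 1 ≤ p)
    (hs : 1 < s) (hu : Continuous u) (hus : HasCompactSupport u) :
    (∫ t in Ioi x, |u t|) ^ p ≤
      (x ^ (1 - s) / (s - 1)) ^ (p - 1) * ∫ t in Ioi x, |u t| ^ p * t ^ (s * (p - 1)) := by
  have hweight : ∫ t in Ioi x, t ^ (-s) = x ^ (1 - s) / (s - 1) := by
    rw [integral_Ioi_rpow_of_lt (by linarith) hx, show -s + 1 = 1 - s by ring, neg_div,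
      ← div_neg, neg_sub]
  have hpow : ∀ t ∈ Ioi x, |u t| ^ p * (t ^ (-s)) ^ (1 - p) = |u t| ^ p * t ^ (s * (p - 1)) :=
    fun t ht => by rw [← Real.rpow_mul (hx.trans ht).le]; ring_nf
  have hint : IntegrableOn (fun t => |u t| ^ p * t ^ (s * (p - 1))) (Ioi x) :=
    ((hu.abs_rpow_mul_rpow (by linarith) (by nlinarith)).integrable_of_hasCompactSupport
      (hus.abs_rpow_mul (by linarith))).integrableOn
  have key := rpow_integral_abs_le_rpow_integral_mul_integral (μ := volume.restrict (Ioi x)) hp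
    hu.aestronglyMeasurable (ae_restrict_of_forall_mem measurableSet_Ioi fun t ht =>
      Real.rpow_pos_of_pos (hx.trans ht) _)
    (integrableOn_Ioi_rpow_of_lt (by linarith) hx)
    (hint.congr_fun (fun t ht => (hpow t ht).symm) measurableSet_Ioi)
  rwa [hweight, setIntegral_congr_fun measurableSet_Ioi hpow] at key

theorem abs_div_rpow_mul_rpow_le {f : ℝ → ℝ} {d p x : ℝ} (hf : ContDiff ℝ 1 f)
    (hfs : HasCompactSupport f) (hp : 1 ≤ p) (hpd : p < d) (hx : 0 < x) :
    |f x / x| ^ p * x ^ (d - 1) ≤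
      (d / p - 1) ^ (1 - p) *
        (x ^ (d / p - 2) * ∫ t in Ioi x, |deriv f t| ^ p * t ^ (d / p * (p - 1))) := by
  have hp0 : 0 < p := by linarith
  have hs : 1 < d / p := (one_lt_div hp0).2 hpd
  have hfx : |f x| ≤ ∫ t in Ioi x, |deriv f t| := by
    rw [← abs_neg, ← hfs.integral_Ioi_deriv_eq hf x]
    exact abs_integral_le_integral_abs
  have hholder := rpow_integral_Ioi_abs_le hx hp hs (hf.continuous_deriv le_rfl) hfs.deriv
  set G := ∫ t in Ioi x, |deriv f t| ^ p * t ^ (d / p * (p - 1))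
  calc |f x / x| ^ p * x ^ (d - 1) = |f x| ^ p * x ^ (d - 1 - p) := by
        rw [abs_div, abs_of_pos hx, Real.div_rpow (abs_nonneg _) hx.le, div_mul_eq_mul_div,
          mul_div_assoc, ← Real.rpow_sub hx]
    _ ≤ (∫ t in Ioi x, |deriv f t|) ^ p * x ^ (d - 1 - p) := by gcongr
    _ ≤ (x ^ (1 - d / p) / (d / p - 1)) ^ (p - 1) * G * x ^ (d - 1 - p) := by gcongr
    _ = (d / p - 1) ^ (1 - p) * (x ^ (d / p - 2) * G) := by
        rw [Real.div_rpow (Real.rpow_nonneg hx.le _) (by linarith), ← Real.rpow_mul hx.le,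
          show 1 - p = -(p - 1) by ring, Real.rpow_neg (by linarith),
          show d / p - 2 = (1 - d / p) * (p - 1) + (d - 1 - p) by field_simp; ring,
          Real.rpow_add hx]
        ring

theorem hardy_inequality_half_line_general
    (d p : ℝ) (hp1 : 1 ≤ p) (hpd : p < d)
    (f : ℝ → ℝ) (hf : ContDiff ℝ 1 f) (hsupp : HasCompactSupport f) :
    ∫ x in Ici (1 : ℝ), |f x / x| ^ p * x ^ (d - 1) ≤
      (p / (d - p)) ^ p * ∫ t in Ici (1 : ℝ), |deriv f t| ^ p * t ^ (d - 1) := by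
  have hp0 : 0 < p := by linarith
  set c := d / p - 1 with hc_def
  have hc : 0 < c := sub_pos.2 ((one_lt_div hp0).2 hpd)
  set g : ℝ → ℝ := fun t => |deriv f t| ^ p * t ^ (d / p * (p - 1))
  have hg : Continuous g := (hf.continuous_deriv le_rfl).abs_rpow_mul_rpow hp0.le
    (mul_nonneg (div_pos (by linarith) hp0).le (by linarith))
  have hgs : HasCompactSupport g := hsupp.deriv.abs_rpow_mul hp0.ne'
  have hweight : ∀ t ∈ Ioi (1 : ℝ), t ^ c * g t = |deriv f t| ^ p * t ^ (d - 1) := fun t ht => by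
    rw [mul_left_comm, ← Real.rpow_add (zero_lt_one.trans ht), hc_def]; congr 2; field_simp; ring
  have hconst : c ^ (1 - p) / c = (p / (d - p)) ^ p := by
    rw [← Real.rpow_sub_one hc.ne', show 1 - p - 1 = -p by ring, Real.rpow_neg hc.le,
      ← Real.inv_rpow hc.le, hc_def, show (d / p - 1)⁻¹ = p / (d - p) by field_simp]
  rw [integral_Ici_eq_integral_Ioi, integral_Ici_eq_integral_Ioi]
  calc ∫ x in Ioi 1, |f x / x| ^ p * x ^ (d - 1)
      ≤ ∫ x in Ioi 1, c ^ (1 - p) * (x ^ (c - 1) * ∫ t in Ioi x, g t) := by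
        refine integral_mono_of_nonneg (ae_restrict_of_forall_mem measurableSet_Ioi fun x hx =>
            mul_nonneg (by positivity) (Real.rpow_nonneg (zero_le_one.trans hx.out.le) _))
          ((integrableOn_Ioi_rpow_mul_integral_Ioi one_pos hg hgs _).const_mul _)
          (ae_restrict_of_forall_mem measurableSet_Ioi fun x hx => ?_)
        have hx := abs_div_rpow_mul_rpow_le hf hsupp hp1 hpd (zero_lt_one.trans hx)
        rwa [show d / p - 2 = c - 1 by rw [hc_def]; ring] at hx
    _ ≤ c ^ (1 - p) * ((∫ t in Ioi 1, t ^ c * g t) / c) := by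
        rw [integral_const_mul]
        gcongr
        exact integral_Ioi_rpow_mul_integral_Ioi_le one_pos hc hg hgs fun t ht =>
            mul_nonneg (by positivity) (Real.rpow_nonneg (zero_le_one.trans ht.out.le) _)
    _ = (p / (d - p)) ^ p * ∫ t in Ioi 1, |deriv f t| ^ p * t ^ (d - 1) := by
        rw [setIntegral_congr_fun measurableSet_Ioi hweight, ← hconst]
        ring

/-- Hardy's inequality on `[1,∞)` with the measure `x^{d-1} dx`: for `d > 1` and
`1 ≤ p < d`, every continuously differentiable compactly supported function `f` satisfies
`∫₁^∞ |f(x)/x|^p x^{d-1} dx ≤ (p/(d-p))^p ∫₁^∞ |f'(t)|^p t^{d-1} dt`. -/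
theorem hardy_inequality_half_line
    (d p : ℝ) (hd : 1 < d) (hp1 : 1 ≤ p) (hpd : p < d)
    (f : ℝ → ℝ) (hf : ContDiff ℝ 1 f) (hsupp : HasCompactSupport f) :
    ∫ x in Ici (1 : ℝ), |f x / x| ^ p * x ^ (d - 1) ≤
      (p / (d - p)) ^ p * ∫ t in Ici (1 : ℝ), |deriv f t| ^ p * t ^ (d - 1) :=
  hardy_inequality_half_line_general d p hp1 hpd f hf hsupp
end

section
/- Let d₁ > 1 and define β = 1 if d₁ ≤ 2 and β = d₁ − 1 if d₁ ≥ 2, and set p₀ = max(d₁, d₁/(d₁−1)). Define f(y) = y^{β−d₁} (1 + log y)^{−1} for y ≥ 1. Then f ∈ L^{p₀}([1,∞), μ_{d₁}), i.e. ∫₁^∞ f(y)^{p₀} y^{d₁−1} dy < ∞, and yet for every x ≥ 1 the integral ∫_x^∞ y^{−β} f(y) y^{d₁−1} dy diverges to +∞. Consequently the operator f ↦ x^{−α} ∫_x^∞ y^{−β} f(y) y^{d₁−1} dy (for any α > 0) is unbounded on L^{p₀}([1,∞), μ_{d₁}). -/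
open MeasureTheory Set Filter
open scoped ENNReal

lemma one_add_log_pos {y : ℝ} (hy : 1 ≤ y) : 0 < 1 + Real.log y := by
  linarith [Real.log_nonneg hy]

lemma hasDerivAt_log_one_add_log {y : ℝ} (hy : 1 ≤ y) :
    HasDerivAt (fun t => Real.log (1 + Real.log t)) (y⁻¹ * (1 + Real.log y)⁻¹) y := by
  simpa [div_eq_mul_inv] using
    ((Real.hasDerivAt_log (by linarith)).const_add 1).log (one_add_log_pos hy).ne'

lemma not_integrableOn_inv_mul_inv_one_add_log {x : ℝ} (hx : 1 ≤ x) :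
    ¬ IntegrableOn (fun y => y⁻¹ * (1 + Real.log y)⁻¹) (Ioi x) := fun hint =>
  not_tendsto_nhds_of_tendsto_atTop
    (Real.tendsto_log_atTop.comp (tendsto_atTop_add_const_left _ 1 Real.tendsto_log_atTop)) _
    (tendsto_limUnder_of_hasDerivAt_of_integrableOn_Ioi
      (fun _ hy => hasDerivAt_log_one_add_log (hx.trans (le_of_lt hy))) hint)

lemma setLIntegral_Ici_inv_mul_inv_one_add_log_eq_top {x : ℝ} (hx : 1 ≤ x) :
    ∫⁻ y in Ici x, ENNReal.ofReal (y⁻¹ * (1 + Real.log y)⁻¹) = ⊤ := by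
  rw [← restrict_Ioi_eq_restrict_Ici]
  by_contra hfin
  have hnonneg : 0 ≤ᵐ[volume.restrict (Ioi x)] fun y => y⁻¹ * (1 + Real.log y)⁻¹ := by
    filter_upwards [ae_restrict_mem measurableSet_Ioi] with y hy
    have := one_add_log_pos (hx.trans hy.le)
    have : 0 < y := by linarith [mem_Ioi.1 hy]
    positivity
  exact not_integrableOn_inv_mul_inv_one_add_log hx
    ⟨(by fun_prop : Measurable fun y : ℝ => y⁻¹ * (1 + Real.log y)⁻¹).aestronglyMeasurable,
      (hasFiniteIntegral_iff_ofReal hnonneg).2 (lt_top_iff_ne_top.2 hfin)⟩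

lemma integrableOn_inv_mul_one_add_log_rpow_neg {p : ℝ} (hp : 1 < p) :
    IntegrableOn (fun y => y⁻¹ * (1 + Real.log y) ^ (-p)) (Ioi 1) := by
  have hderiv : ∀ y ∈ Ici (1 : ℝ), HasDerivAt (fun t => (1 - p)⁻¹ * (1 + Real.log t) ^ (1 - p))
      (y⁻¹ * (1 + Real.log y) ^ (-p)) y := by
    intro y hy
    refine ((((Real.hasDerivAt_log (by linarith [mem_Ici.1 hy])).const_add 1).rpow_const
      (p := 1 - p) (Or.inl (one_add_log_pos hy).ne')).const_mul (1 - p)⁻¹).congr_deriv ?_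
    rw [sub_sub_cancel_left]
    field_simp [show 1 - p ≠ 0 by linarith]
  have hlim : Tendsto (fun t => (1 - p)⁻¹ * (1 + Real.log t) ^ (1 - p)) atTop
      (nhds ((1 - p)⁻¹ * 0)) := by
    refine Tendsto.const_mul _ ?_
    simpa [neg_sub, Function.comp_def] using (tendsto_rpow_neg_atTop (by linarith : 0 < p - 1)).comp
      (tendsto_atTop_add_const_left _ 1 Real.tendsto_log_atTop)
  refine integrableOn_Ioi_deriv_of_nonneg' hderiv (fun y hy => ?_) hlim
  have := one_add_log_pos (le_of_lt hy)
  have : 0 < y := by linarith [mem_Ioi.1 hy]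
  positivity

lemma ae_mu_one_le (n : ℝ) : ∀ᵐ x ∂mu n, 1 ≤ x :=
  (withDensity_absolutelyContinuous _ _).ae_le (ae_restrict_mem measurableSet_Ici)

lemma mu_univ {n : ℝ} (hn : 1 ≤ n) : mu n univ = ⊤ := by
  rw [mu, withDensity_apply _ MeasurableSet.univ, Measure.restrict_univ, eq_top_iff]
  calc ⊤ = ∫⁻ _ in Ici (1 : ℝ), 1 := by simp
    _ ≤ _ := setLIntegral_mono' measurableSet_Ici fun y hy =>
        ENNReal.one_le_ofReal.2 (Real.one_le_rpow hy (by linarith))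

lemma lintegral_mu (n : ℝ) (g : ℝ → ℝ≥0∞) :
    ∫⁻ y, g y ∂mu n = ∫⁻ y in Ici 1, ENNReal.ofReal (y ^ (n - 1)) * g y :=
  lintegral_withDensity_eq_lintegral_mul_non_measurable _ (by fun_prop)
    (ae_of_all _ fun _ => ENNReal.ofReal_lt_top) g

lemma memLp_mu_of_integrableOn {n p : ℝ} (hp : 0 < p) {f : ℝ → ℝ}
    (hf : AEStronglyMeasurable f (mu n))
    (h : IntegrableOn (fun y => y ^ (n - 1) * |f y| ^ p) (Ioi 1)) :
    MemLp f (ENNReal.ofReal p) (mu n) := by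
  refine ⟨hf, (eLpNorm_lt_top_iff_lintegral_rpow_enorm_lt_top (by simpa using hp)
    ENNReal.ofReal_ne_top).2 ?_⟩
  rw [ENNReal.toReal_ofReal hp.le, lintegral_mu, ← restrict_Ioi_eq_restrict_Ici]
  refine lt_of_eq_of_lt (setLIntegral_congr_fun measurableSet_Ioi fun y hy => ?_) h.lintegral_lt_top
  rw [Real.enorm_eq_ofReal_abs, ENNReal.ofReal_rpow_of_nonneg (abs_nonneg _) hp.le,
    ← ENNReal.ofReal_mul (Real.rpow_nonneg (zero_le_one.trans (le_of_lt hy)) _)]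

lemma lintegral_mu_rpow_mul_eq_top {n p : ℝ} (hn : 1 ≤ n) (hp : 0 < p) (α : ℝ)
    {K : ℝ → ℝ≥0∞} (hK : ∀ x, 1 ≤ x → K x = ⊤) :
    ∫⁻ x, (ENNReal.ofReal (x ^ (-α)) * K x) ^ p ∂mu n = ⊤ := by
  have hae : ∀ᵐ x ∂mu n, (ENNReal.ofReal (x ^ (-α)) * K x) ^ p = ⊤ := by
    filter_upwards [ae_mu_one_le n] with x hx
    rw [hK x hx, ENNReal.mul_top (ENNReal.ofReal_pos.2 (Real.rpow_pos_of_pos (by linarith) _)).ne',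
      ENNReal.top_rpow_of_pos hp]
  rw [lintegral_congr_ae hae, lintegral_const, mu_univ hn, ENNReal.top_mul_top]

/-- `powLogInv (β - d₁)` is the function `f` of the statement. -/
noncomputable def powLogInv (s y : ℝ) : ℝ := y ^ s * (1 + Real.log y)⁻¹

lemma powLogInv_nonneg (s : ℝ) {y : ℝ} (hy : 1 ≤ y) : 0 ≤ powLogInv s y := by
  have := one_add_log_pos hy
  have : 0 < y := by linarith
  unfold powLogInv
  positivity

lemma measurable_powLogInv (s : ℝ) : Measurable (powLogInv s) := by
  unfold powLogInv
  fun_prop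

lemma rpow_mul_abs_powLogInv_rpow {n s p y : ℝ} (h : p * s = -n) (hy : 1 ≤ y) :
    y ^ (n - 1) * |powLogInv s y| ^ p = y⁻¹ * (1 + Real.log y) ^ (-p) := by
  have hlog := one_add_log_pos hy
  have hy0 : 0 < y := by linarith
  rw [abs_of_nonneg (powLogInv_nonneg s hy), powLogInv,
    Real.mul_rpow (Real.rpow_nonneg hy0.le _) (inv_nonneg.2 hlog.le), ← Real.rpow_mul hy0.le,
    Real.inv_rpow hlog.le, ← Real.rpow_neg hlog.le, ← mul_assoc, ← Real.rpow_add hy0,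
    show n - 1 + s * p = -1 by linarith, Real.rpow_neg_one]

lemma rpow_mul_powLogInv_mul_rpow {a b s y : ℝ} (h : a + s + b = -1) (hy : 0 < y) :
    y ^ a * powLogInv s y * y ^ b = y⁻¹ * (1 + Real.log y)⁻¹ := by
  have hpow : y ^ a * y ^ s * y ^ b = y⁻¹ := by
    rw [← Real.rpow_add hy, ← Real.rpow_add hy, h, Real.rpow_neg_one]
  rw [powLogInv, ← hpow]
  ring

lemma memLp_powLogInv {n s p : ℝ} (hp : 1 < p) (h : p * s = -n) :
    MemLp (powLogInv s) (ENNReal.ofReal p) (mu n) :=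
  memLp_mu_of_integrableOn (by linarith) (measurable_powLogInv s).aestronglyMeasurable
    ((integrableOn_inv_mul_one_add_log_rpow_neg hp).congr_fun
      (fun y hy => (rpow_mul_abs_powLogInv_rpow h (le_of_lt hy)).symm) measurableSet_Ioi)

lemma setLIntegral_rpow_mul_powLogInv_mul_rpow_eq_top {a b s x : ℝ} (h : a + s + b = -1)
    (hx : 1 ≤ x) : ∫⁻ y in Ici x, ENNReal.ofReal (y ^ a * powLogInv s y * y ^ b) = ⊤ := by
  rw [setLIntegral_congr_fun measurableSet_Ici fun y (hy : x ≤ y) => by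
    rw [rpow_mul_powLogInv_mul_rpow h (by linarith)]]
  exact setLIntegral_Ici_inv_mul_inv_one_add_log_eq_top hx

lemma mul_sub_eq_neg_of_endpoint {d β p : ℝ} (hd : 1 < d)
    (hβ : β = if d ≤ 2 then 1 else d - 1) (hp : p = max d (d / (d - 1))) :
    p * (β - d) = -d := by
  have hd' : 0 < d - 1 := by linarith
  rcases le_or_gt d 2 with h | h
  · rw [hβ, if_pos h, hp, max_eq_right (by rw [le_div_iff₀ hd']; nlinarith)]
    field_simp
    ring
  · rw [hβ, if_neg h.not_ge, hp, max_eq_left (by rw [div_le_iff₀ hd']; nlinarith)]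
    ring

/-- With `β = 1` for `d₁ ≤ 2` and `β = d₁ - 1` for `d₁ ≥ 2`, and `p₀ = max(d₁, d₁')`,
the function `f(y) = y^{β-d₁}(1 + log y)^{-1}` belongs to `L^{p₀}([1,∞), μ_{d₁})`, yet
`∫_x^∞ y^{-β} f(y) y^{d₁-1} dy = +∞` for every `x ≥ 1`.  Consequently, the operator
`f ↦ x^{-α} ∫_x^∞ y^{-β} f(y) y^{d₁-1} dy` is unbounded on `L^{p₀}([1,∞), μ_{d₁})`
for every `α > 0`. -/
theorem riesz_transform_endpoint_unbounded
    (d₁ β p₀ : ℝ) (hd₁ : 1 < d₁)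
    (hβ : β = if d₁ ≤ 2 then 1 else d₁ - 1)
    (hp₀ : p₀ = max d₁ (d₁ / (d₁ - 1))) :
    MemLp (fun y => y ^ (β - d₁) * (1 + Real.log y)⁻¹) (ENNReal.ofReal p₀) (mu d₁) ∧
    (∀ x ≥ (1 : ℝ), ∫⁻ y in Ici x,
        ENNReal.ofReal (y ^ (-β) * (y ^ (β - d₁) * (1 + Real.log y)⁻¹) * y ^ (d₁ - 1)) = ⊤) ∧
    (∀ α > (0 : ℝ), ¬ ∃ C : ENNReal, C < ⊤ ∧
      ∀ g : ℝ → ℝ, (∀ y, 0 ≤ g y) → MemLp g (ENNReal.ofReal p₀) (mu d₁) →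
        (∫⁻ x, (ENNReal.ofReal (x ^ (-α)) *
            ∫⁻ y in Ici x, ENNReal.ofReal (y ^ (-β) * g y * y ^ (d₁ - 1))) ^ p₀
          ∂(mu d₁)) ^ (1 / p₀) ≤ C * eLpNorm g (ENNReal.ofReal p₀) (mu d₁)) := by
  have hp₁ : 1 < p₀ := hp₀ ▸ hd₁.trans_le (le_max_left _ _)
  have hmem : MemLp (powLogInv (β - d₁)) (ENNReal.ofReal p₀) (mu d₁) :=
    memLp_powLogInv hp₁ (mul_sub_eq_neg_of_endpoint hd₁ hβ hp₀)
  have hdiv : ∀ x ≥ (1 : ℝ), ∫⁻ y in Ici x,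
      ENNReal.ofReal (y ^ (-β) * powLogInv (β - d₁) y * y ^ (d₁ - 1)) = ⊤ :=
    fun x hx => setLIntegral_rpow_mul_powLogInv_mul_rpow_eq_top (by ring) hx
  refine ⟨hmem, hdiv, ?_⟩
  rintro α - ⟨C, hC, hbound⟩
  -- `f` may be negative on `y < 1`, outside the support of `μ_{d₁}`.
  set g := (Ici (1 : ℝ)).indicator (powLogInv (β - d₁))
  have hg : MemLp g (ENNReal.ofReal p₀) (mu d₁) :=
    hmem.ae_eq ((ae_mu_one_le d₁).mono fun y hy => (indicator_of_mem hy _).symm)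
  have hbound_g := hbound g (indicator_nonneg fun y hy => powLogInv_nonneg _ hy) hg
  rw [lintegral_mu_rpow_mul_eq_top hd₁.le (by linarith) α fun x hx => ?_,
    ENNReal.top_rpow_of_pos (by positivity)] at hbound_g
  · exact (ENNReal.mul_lt_top hC hg.eLpNorm_lt_top).ne (top_le_iff.1 hbound_g)
  · rw [← hdiv x hx]
    refine setLIntegral_congr_fun measurableSet_Ici fun y (hy : x ≤ y) => ?_
    simp only [g, indicator_of_mem (mem_Ici.2 (hx.trans hy))]
end
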